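/- arXiv:1908.10157 — 4 statements merged into one kernel-verified Lean document; each statement's English description precedes it below -/
import Mathlib

section
/- Let K be an algebraically closed field, V a nonzero finite-dimensional K-vector space of dimension n, and A a subalgebra of End_K(V) such that every a ∈ A is quasi-nilpotent (i.e., for each a ∈ A there exists γ ∈ K with a − γ·id nilpotent). Then there exists a full flag 0 = V_0 ⊂ V_1 ⊂ ⋯ ⊂ V_n = V of subspaces with dim V_i = i such that every a ∈ A maps each V_i into itself; equivalently, in some basis of V all elements of A are simultaneously upper triangular, with the eigenvalue of a on the diagonal. -/
open Module Submodule

section Helpers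
variable {K : Type} [Field K] {V : Type} [AddCommGroup V] [Module K V]

variable {K : Type} [Field K] {V : Type} [AddCommGroup V] [Module K V]

lemma pow_apply_eigen (f : Module.End K V) (v : V) (δ : K) (h : f v = δ • v) :
    ∀ m : ℕ, (f ^ m) v = δ ^ m • v := by
  intro m
  induction m with
  | zero => simp
  | succ m ih =>
      rw [pow_succ, Module.End.mul_apply, h, map_smul, ih, smul_smul, pow_succ, mul_comm]

lemma exists_common_eigenvector [FiniteDimensional K V] [Nontrivial V]
    (A : NonUnitalSubalgebra K (Module.End K V))
    (hA : ∀ a ∈ A, ∃ γ : K, IsNilpotent (a - γ • (1 : Module.End K V))) :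
    ∃ v : V, v ≠ 0 ∧ ∀ a ∈ A, a v ∈ Submodule.span K {v} := by
  classical
  -- minimal nonzero invariant subspace
  set P : ℕ → Prop := fun k =>
    ∃ W : Submodule K V, (W ≠ ⊥ ∧ ∀ a ∈ A, W.map a ≤ W) ∧ finrank K ↥W = k with hP
  have hPex : ∃ k, P k := ⟨finrank K V, ⊤, ⟨top_ne_bot, fun a _ => le_top⟩, finrank_top K V⟩
  obtain ⟨W, ⟨hWne, hWinv⟩, hWrank⟩ := Nat.find_spec hPex
  have hmin : ∀ W' : Submodule K V, W' ≠ ⊥ → (∀ a ∈ A, W'.map a ≤ W') → W' ≤ W → W' = W := by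
    intro W' h1 h2 hle
    refine Submodule.eq_of_le_of_finrank_eq hle (le_antisymm (Submodule.finrank_mono hle) ?_)
    rw [hWrank]
    exact Nat.find_min' hPex ⟨W', ⟨h1, h2⟩, rfl⟩
  by_cases hcase : ∃ w ∈ W, w ≠ 0 ∧ ∀ a ∈ A, a w ∈ span K {w}
  · obtain ⟨w, _, hw0, hw⟩ := hcase
    exact ⟨w, hw0, hw⟩
  push_neg at hcase
  exfalso
  obtain ⟨w, hwW, hw0⟩ := Submodule.ne_bot_iff W |>.1 hWne
  obtain ⟨a1, ha1A, ha1w⟩ := hcase w hwW hw0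
  obtain ⟨γ1, k, hk⟩ := hA a1 ha1A
  set n : Module.End K V := a1 - γ1 • (1 : Module.End K V) with hn
  set u : V := n w with hu
  have hnw : n w = a1 w - γ1 • w := by
    simp [hn, LinearMap.sub_apply, LinearMap.smul_apply]
  have hu0 : u ≠ 0 := by
    intro h
    apply ha1w
    rw [Submodule.mem_span_singleton]
    exact ⟨γ1, by rw [hu, hnw] at h; linear_combination (norm := module) -h⟩
  have huW : u ∈ W := by
    rw [hu, hnw]
    exact W.sub_mem (hWinv a1 ha1A ⟨w, hwW, rfl⟩) (W.smul_mem _ hwW)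
  -- U = span{u} ⊔ A u
  let e : Module.End K V →ₗ[K] V :=
    { toFun := fun f => f u, map_add' := fun f g => rfl, map_smul' := fun c f => rfl }
  set U : Submodule K V := span K {u} ⊔ A.toSubmodule.map e with hUdef
  have huU : u ∈ U := le_sup_left (α := Submodule K V) (Submodule.mem_span_singleton_self u)
  have hUW : U ≤ W := by
    refine sup_le (span_le.2 ?_) ?_
    · intro x hx; simp only [Set.mem_singleton_iff] at hx; subst hx; exact huW
    · rintro x ⟨c, hc, rfl⟩
      exact hWinv c hc ⟨u, huW, rfl⟩
  have hUne : U ≠ ⊥ := Submodule.ne_bot_iff U |>.2 ⟨u, huU, hu0⟩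
  have hUinv : ∀ a ∈ A, U.map a ≤ U := by
    rintro a haA x ⟨y, hy, rfl⟩
    simp only [SetLike.mem_coe] at hy
    rw [Submodule.mem_sup] at hy
    obtain ⟨s, hs, t, ht, rfl⟩ := hy
    obtain ⟨μ, rfl⟩ := Submodule.mem_span_singleton.1 hs
    obtain ⟨c, hcA', rfl⟩ := ht
    have hcA : c ∈ A := hcA'
    have : a (μ • u + e c) = e (μ • a + a * c) := by
      simp [e, Module.End.mul_apply, map_smul]
    rw [this]
    refine le_sup_right (α := Submodule K V) ⟨μ • a + a * c, ?_, rfl⟩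
    show μ • a + a * c ∈ A
    exact add_mem (SMulMemClass.smul_mem μ haA) (mul_mem haA hcA)
  have hUeq : U = W := hmin U hUne hUinv hUW
  rw [← hUeq, hUdef, Submodule.mem_sup] at hwW
  obtain ⟨s, hs, t, ht, hw⟩ := hwW
  obtain ⟨μ, rfl⟩ := Submodule.mem_span_singleton.1 hs
  obtain ⟨c, hcA', rfl⟩ := ht
  have hcA : c ∈ A := hcA'
  -- b fixes u
  set b : Module.End K V := μ • n + n * c with hb
  have hbu : b u = u := by
    have : b u = n (μ • u + e c) := by
      simp [hb, e, Module.End.mul_apply, map_add, map_smul]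
    rw [this, hw, ← hu]
  -- b is quasi-nilpotent with eigenvalue 1
  set a' : Module.End K V := μ • a1 + a1 * c - γ1 • c with ha'
  have ha'A : a' ∈ A :=
    sub_mem (add_mem (SMulMemClass.smul_mem μ ha1A) (mul_mem ha1A hcA))
      (SMulMemClass.smul_mem γ1 hcA)
  have hba : b = a' - (μ * γ1) • (1 : Module.End K V) := by
    rw [hb, hn, ha']
    rw [smul_sub, sub_mul, smul_mul_assoc, one_mul, smul_smul]
    abel
  obtain ⟨γ', m, hm⟩ := hA a' ha'A
  set β : K := γ' - μ * γ1 with hβ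
  have hbeta : b - β • (1 : Module.End K V) = a' - γ' • (1 : Module.End K V) := by
    rw [hba, hβ, sub_smul]
    abel
  have heig : (b - β • (1 : Module.End K V)) u = (1 - β) • u := by
    simp [LinearMap.sub_apply, LinearMap.smul_apply, hbu, sub_smul]
  have hzero : (1 - β) ^ m • u = 0 := by
    rw [← pow_apply_eigen _ _ _ heig m, hbeta, hm, LinearMap.zero_apply]
  have h1β : (1 - β) ^ m = 0 := by
    rcases smul_eq_zero.1 hzero with h | h
    · exact h
    · exact absurd h hu0
  have hβ1 : β = 1 := by
    have h0 : (1 : K) - β = 0 := (pow_eq_zero_iff'.mp h1β).1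
    have := sub_eq_zero.mp h0
    exact this.symm
  -- b is invertible
  have hbnil : IsNilpotent (b - 1) := by
    refine ⟨m, ?_⟩
    have : b - 1 = b - β • (1 : Module.End K V) := by rw [hβ1, one_smul]
    rw [this, hbeta, hm]
  have hbunit : IsUnit b := by
    have := IsNilpotent.isUnit_one_add hbnil
    rwa [add_sub_cancel] at this
  have hbsurj : Function.Surjective b := ((Module.End.isUnit_iff b).1 hbunit).2
  -- but b factors through the nilpotent n
  have hfac : b = n * (μ • (1 : Module.End K V) + c) := by
    rw [hb, mul_add, mul_smul_comm, mul_one]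
  have hnsurj : Function.Surjective n := by
    intro y
    obtain ⟨x, hx⟩ := hbsurj y
    exact ⟨(μ • (1 : Module.End K V) + c) x, by rw [← Module.End.mul_apply, ← hfac, hx]⟩
  have hninj : Function.Injective n := LinearMap.injective_iff_surjective.2 hnsurj
  have : u = 0 := by
    have hiter : Function.Injective (⇑n)^[k] := Function.Injective.iterate hninj k
    apply hiter
    rw [← Module.End.pow_apply, ← Module.End.pow_apply, hk]
    simp
  exact hu0 this


variable {K : Type} [Field K] {V : Type} [AddCommGroup V] [Module K V]

lemma finrank_comap_mkQ [FiniteDimensional K V] (L : Submodule K V) (W : Submodule K (V ⧸ L)) :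
    finrank K ↥(W.comap L.mkQ) = finrank K ↥W + finrank K ↥L := by
  set U := W.comap L.mkQ with hU
  have hLU : L ≤ U := by
    intro x hx
    show L.mkQ x ∈ W
    have h0 : L.mkQ x = 0 := by
      rw [Submodule.mkQ_apply]; exact (Submodule.Quotient.mk_eq_zero L).2 hx
    rw [h0]; exact W.zero_mem
  set f := L.mkQ.domRestrict U with hf
  have hrange : LinearMap.range f = W := by
    rw [hf, LinearMap.range_domRestrict, hU, Submodule.map_comap_eq_of_surjective L.mkQ_surjective]
  have hker : LinearMap.ker f = Submodule.comap U.subtype L := by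
    ext x
    simp [hf, LinearMap.mem_ker, Submodule.mem_comap, Submodule.mkQ_apply,
      Submodule.Quotient.mk_eq_zero]
  have h1 := LinearMap.finrank_range_add_finrank_ker f
  rw [hrange, hker] at h1
  rw [← h1, (Submodule.comapSubtypeEquivOfLe hLU).finrank_eq]

lemma comm_pow {V' : Type} [AddCommGroup V'] [Module K V'] (π : V →ₗ[K] V')
    (f : Module.End K V') (g : Module.End K V) (h : ∀ x, f (π x) = π (g x)) :
    ∀ (m : ℕ) (x : V), (f ^ m) (π x) = π ((g ^ m) x) := by
  intro m
  induction m with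
  | zero => simp
  | succ m ih =>
      intro x
      rw [pow_succ, Module.End.mul_apply, h, ih, pow_succ, Module.End.mul_apply]

end Helpers

lemma aux_flag (K : Type) [Field K] [IsAlgClosed K] :
    ∀ n : ℕ, ∀ (V : Type) [AddCommGroup V] [Module K V] [FiniteDimensional K V],
    finrank K V = n →
    ∀ (A : NonUnitalSubalgebra K (Module.End K V)),
    (∀ a ∈ A, ∃ γ : K, IsNilpotent (a - γ • (1 : Module.End K V))) →
    ∃ flag : Fin (n + 1) → Submodule K V,
      Monotone flag ∧ flag 0 = ⊥ ∧ flag (Fin.last n) = ⊤ ∧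
      (∀ i, finrank K ↥(flag i) = (i : ℕ)) ∧
      (∀ a ∈ A, ∀ γ : K, IsNilpotent (a - γ • (1 : Module.End K V)) →
        ∀ i : Fin n, (flag i.succ).map (a - γ • (1 : Module.End K V)) ≤ flag i.castSucc) := by
  intro n
  induction n with
  | zero =>
      intro V _ _ _ hrank A hA
      have hsub : Subsingleton V := finrank_zero_iff.mp hrank
      have hbt : (⊥ : Submodule K V) = ⊤ := by
        ext x
        have : x = 0 := Subsingleton.elim x 0
        simp [this]
      refine ⟨fun _ => ⊥, monotone_const, rfl, hbt, ?_, ?_⟩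
      · intro i
        have : (i : ℕ) = 0 := by omega
        simp [this, finrank_bot]
      · intro a _ γ _ i
        exact i.elim0
  | succ n ih =>
      intro V _ _ _ hrank A hA
      have hnt : Nontrivial V := by
        rw [← rank_pos_iff_nontrivial (R := K), ← finrank_eq_rank]
        rw [hrank]; exact_mod_cast Nat.succ_pos n
      obtain ⟨v, hv0, hv⟩ := exists_common_eigenvector A hA
      set L : Submodule K V := span K {v} with hLdef
      have hvL : v ∈ L := Submodule.mem_span_singleton_self v
      have hLrank : finrank K ↥L = 1 := finrank_span_singleton hv0
      have hrankQ : finrank K (V ⧸ L) = n := by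
        have h2 := Submodule.finrank_quotient_add_finrank L
        omega
      -- eigenvalue identification
      have heigen : ∀ a ∈ A, ∀ γ : K, IsNilpotent (a - γ • (1 : Module.End K V)) →
          (a - γ • (1 : Module.End K V)) v = 0 := by
        intro a haA γ ⟨m, hm⟩
        obtain ⟨μ, hμ⟩ := Submodule.mem_span_singleton.1 (hv a haA)
        have h1 : (a - γ • (1 : Module.End K V)) v = (μ - γ) • v := by
          simp [LinearMap.sub_apply, LinearMap.smul_apply, ← hμ, sub_smul]
        have h2 : (μ - γ) ^ m • v = 0 := by
          rw [← pow_apply_eigen _ _ _ h1 m, hm, LinearMap.zero_apply]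
        have h3 : (μ - γ) ^ m = 0 := by
          rcases smul_eq_zero.1 h2 with h | h
          · exact h
          · exact absurd h hv0
        have h4 : μ - γ = 0 := (pow_eq_zero_iff'.mp h3).1
        rw [h1, h4, zero_smul]
      have hLinv : ∀ a ∈ A, L.map a ≤ L := by
        intro a haA
        rintro x ⟨y, hy, rfl⟩
        obtain ⟨c, rfl⟩ := Submodule.mem_span_singleton.1 hy
        rw [map_smul]
        exact L.smul_mem c (hv a haA)
      -- the quotient algebra
      let A' : NonUnitalSubalgebra K (Module.End K (V ⧸ L)) :=
        { carrier := {b | ∃ a ∈ A, ∀ x : V, b (L.mkQ x) = L.mkQ (a x)}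
          add_mem' := by
            rintro b1 b2 ⟨a1, ha1, h1⟩ ⟨a2, ha2, h2⟩
            exact ⟨a1 + a2, add_mem ha1 ha2, fun x => by
              simp only [LinearMap.add_apply]
              rw [h1 x, h2 x, map_add]⟩
          zero_mem' := ⟨0, zero_mem A, fun x => by simp⟩
          mul_mem' := by
            rintro b1 b2 ⟨a1, ha1, h1⟩ ⟨a2, ha2, h2⟩
            exact ⟨a1 * a2, mul_mem ha1 ha2, fun x => by
              rw [Module.End.mul_apply, h2 x, h1 (a2 x), Module.End.mul_apply]⟩
          smul_mem' := by
            rintro c b ⟨a, ha, h⟩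
            exact ⟨c • a, SMulMemClass.smul_mem c ha, fun x => by
              simp only [LinearMap.smul_apply]
              rw [h x, map_smul]⟩ }
      have hmemA' : ∀ b : Module.End K (V ⧸ L),
          b ∈ A' ↔ ∃ a ∈ A, ∀ x : V, b (L.mkQ x) = L.mkQ (a x) := fun _ => Iff.rfl
      -- commutation for differences and nilpotency transfer
      have hdiff : ∀ (b : Module.End K (V ⧸ L)) (a : Module.End K V) (γ : K),
          (∀ x : V, b (L.mkQ x) = L.mkQ (a x)) →
          ∀ x : V, (b - γ • (1 : Module.End K (V ⧸ L))) (L.mkQ x)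
            = L.mkQ ((a - γ • (1 : Module.End K V)) x) := by
        intro b a γ h x
        simp only [LinearMap.sub_apply, LinearMap.smul_apply, Module.End.one_apply]
        rw [h x, map_sub, map_smul]
      have hnilp : ∀ (b : Module.End K (V ⧸ L)) (a : Module.End K V) (γ : K),
          (∀ x : V, b (L.mkQ x) = L.mkQ (a x)) →
          IsNilpotent (a - γ • (1 : Module.End K V)) →
          IsNilpotent (b - γ • (1 : Module.End K (V ⧸ L))) := by
        rintro b a γ h ⟨m, hm⟩
        refine ⟨m, ?_⟩
        apply LinearMap.ext
        intro y
        obtain ⟨x, rfl⟩ := L.mkQ_surjective y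
        rw [comm_pow L.mkQ _ _ (hdiff b a γ h) m x, hm]
        simp
      have hA' : ∀ b ∈ A', ∃ γ : K, IsNilpotent (b - γ • (1 : Module.End K (V ⧸ L))) := by
        rintro b ⟨a, haA, h⟩
        obtain ⟨γ, hγ⟩ := hA a haA
        exact ⟨γ, hnilp b a γ h hγ⟩
      obtain ⟨flag', hmono', h0', htop', hrank'', htri'⟩ := ih (V ⧸ L) hrankQ A' hA'
      -- build the flag on V
      refine ⟨fun i => Fin.cases ⊥ (fun j => (flag' j).comap L.mkQ) i, ?_, ?_, ?_, ?_, ?_⟩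
      · -- Monotone
        intro i j hij
        induction i using Fin.cases with
        | zero => simp
        | succ i =>
            induction j using Fin.cases with
            | zero =>
                exact absurd hij (by simp [Fin.le_def])
            | succ j =>
                simp only [Fin.cases_succ]
                exact Submodule.comap_mono (hmono' (by rwa [Fin.succ_le_succ_iff] at hij))
      · -- flag 0 = ⊥
        simp
      · -- flag last = ⊤
        rw [← Fin.succ_last]
        simp only [Fin.cases_succ]
        rw [htop', Submodule.comap_top]
      · -- ranks
        intro i
        induction i using Fin.cases with
        | zero => exact finrank_bot (R := K) (M := V)
        | succ j =>
            show finrank K ↥((flag' j).comap L.mkQ) = _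
            rw [finrank_comap_mkQ, hrank'' j, hLrank, Fin.val_succ]
      · -- triangularity
        intro a haA γ hγ i
        -- the induced endomorphism on the quotient
        have hle : L ≤ L.comap a := Submodule.map_le_iff_le_comap.1 (hLinv a haA)
        set b : Module.End K (V ⧸ L) := Submodule.mapQ L L a hle with hbdef
        have hbcomm : ∀ x : V, b (L.mkQ x) = L.mkQ (a x) := by
          intro x
          rw [hbdef]
          simp [Submodule.mapQ_apply, Submodule.mkQ_apply]
        have hbA' : b ∈ A' := ⟨a, haA, hbcomm⟩
        have hbnil : IsNilpotent (b - γ • (1 : Module.End K (V ⧸ L))) :=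
          hnilp b a γ hbcomm hγ
        induction i using Fin.cases with
        | zero =>
            rintro x ⟨y, hy, rfl⟩
            simp only [Fin.cases_succ, h0', Submodule.comap_bot, Submodule.ker_mkQ] at hy
            simp only [Fin.castSucc_zero, Fin.cases_zero]
            obtain ⟨c, rfl⟩ := Submodule.mem_span_singleton.1 hy
            have h2 : (a - γ • (1 : Module.End K V)) (c • v) = 0 := by
              rw [map_smul, heigen a haA γ hγ, smul_zero]
            rw [h2]
            exact Submodule.zero_mem ⊥
        | succ j =>
            rintro x ⟨y, hy, rfl⟩
            simp only [Fin.cases_succ] at hy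
            simp only [← Fin.succ_castSucc, Fin.cases_succ]
            show L.mkQ ((a - γ • (1 : Module.End K V)) y) ∈ flag' j.castSucc
            rw [← hdiff b a γ hbcomm y]
            exact htri' b hbA' γ hbnil j ⟨L.mkQ y, hy, rfl⟩


/-- Let `K` be an algebraically closed field, `V` a nonzero
finite-dimensional `K`-vector space of dimension `n`, and `A` a (not necessarily
unital) subalgebra of `End_K(V)` all of whose elements are quasi-nilpotent (for each
`a ∈ A` there is `γ ∈ K` with `a - γ·id` nilpotent). Then there is a full flag
`0 = V_0 ⊂ V_1 ⊂ ⋯ ⊂ V_n = V` with `dim V_i = i`, invariant under every `a ∈ A`;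
moreover each `a ∈ A` acts on the flag upper-triangularly with its eigenvalue `γ` on
the diagonal, i.e. `(a - γ·id)(V_{i+1}) ⊆ V_i`. -/
theorem exists_invariant_full_flag (K : Type) [Field K] [IsAlgClosed K]
    (V : Type) [AddCommGroup V] [Module K V] [FiniteDimensional K V] [Nontrivial V]
    (A : NonUnitalSubalgebra K (Module.End K V))
    (hA : ∀ a ∈ A, ∃ γ : K, IsNilpotent (a - γ • (1 : Module.End K V))) :
    ∃ flag : Fin (Module.finrank K V + 1) → Submodule K V,
      StrictMono flag ∧
      flag 0 = ⊥ ∧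
      flag (Fin.last (Module.finrank K V)) = ⊤ ∧
      (∀ i, Module.finrank K (flag i) = (i : ℕ)) ∧
      (∀ a ∈ A, ∀ i, (flag i).map a ≤ flag i) ∧
      (∀ a ∈ A, ∀ γ : K, IsNilpotent (a - γ • (1 : Module.End K V)) →
        ∀ i : Fin (Module.finrank K V),
          (flag i.succ).map (a - γ • (1 : Module.End K V)) ≤ flag i.castSucc) := by
  obtain ⟨flag, hmono, h0, htop, hrank, htri⟩ :=
    aux_flag K (Module.finrank K V) V rfl A hA
  have hstrict : StrictMono flag := by
    intro i j hij
    refine lt_of_le_of_ne (hmono hij.le) ?_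
    intro e
    have h1 := hrank i
    rw [e, hrank j] at h1
    exact absurd h1 (by omega)
  have hinv : ∀ a ∈ A, ∀ i, (flag i).map a ≤ flag i := by
    intro a haA i
    induction i using Fin.cases with
    | zero =>
        rw [h0, Submodule.map_bot]
    | succ j =>
        obtain ⟨γ, hγ⟩ := hA a haA
        rintro x ⟨y, hy, rfl⟩
        have h1 : (a - γ • (1 : Module.End K V)) y ∈ flag j.castSucc :=
          htri a haA γ hγ j ⟨y, hy, rfl⟩
        have h2 : a y = (a - γ • (1 : Module.End K V)) y + γ • y := by
          simp [LinearMap.sub_apply, LinearMap.smul_apply]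
        rw [h2]
        exact Submodule.add_mem _ (hmono (Fin.castSucc_le_succ j) h1)
          (Submodule.smul_mem _ _ hy)
  exact ⟨flag, hstrict, h0, htop, hrank, hinv, htri⟩
end

section
/- Let F be a field with algebraic closure F̄, U a finite-dimensional F-vector space, and A a quasi-nilpotent subalgebra of End_F(U). If a, b ∈ A, γ, δ ∈ F̄ are such that the base change of a to F̄ ⊗_F U minus γ·id is nilpotent and the base change of b minus δ·id is nilpotent, then the base change of a + b minus (γ + δ)·id is nilpotent. In other words, eig(a+b) = eig(a) + eig(b) for a, b ∈ A. -/
set_option maxHeartbeats 1000000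
set_option synthInstance.maxHeartbeats 400000
open Module LinearMap
section AuxQN

variable {K : Type} [Field K] [IsAlgClosed K] {V : Type} [AddCommGroup V] [Module K V]
  [FiniteDimensional K V]

/-- Schur: a `B`-endomorphism of a simple `B`-submodule structure on `V` is a scalar. -/
lemma schur_scalar (B : Subalgebra K (Module.End K V)) [Nontrivial V]
    [IsSimpleModule B V] (φ : V →ₗ[B] V) : ∃ μ : K, ∀ x : V, φ x = μ • x := by
  classical
  -- φ as a K-linear endomorphism
  let φK : Module.End K V :=
    { toFun := φ
      map_add' := φ.map_add
      map_smul' := by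
        intro c x
        have : φ ((⟨algebraMap K (Module.End K V) c, B.algebraMap_mem c⟩ : B) • x)
            = (⟨algebraMap K (Module.End K V) c, B.algebraMap_mem c⟩ : B) • φ x :=
          φ.map_smul _ x
        simpa [Module.algebraMap_end_apply] using this }
  obtain ⟨μ, hμ⟩ := Module.End.exists_eigenvalue φK
  obtain ⟨x, hx⟩ := hμ.exists_hasEigenvector
  refine ⟨μ, ?_⟩
  -- the scalar map as B-linear
  let σ : V →ₗ[B] V :=
    { toFun := fun y => μ • y
      map_add' := by intro y z; rw [smul_add]
      map_smul' := by
        intro b y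
        show μ • ((b : Module.End K V) y) = (b : Module.End K V) (μ • y)
        rw [map_smul] }
  have hker : (LinearMap.ker (φ - σ) : Submodule B V) = ⊤ := by
    rcases eq_bot_or_eq_top (LinearMap.ker (φ - σ)) with h | h
    · exfalso
      have hxmem : x ∈ LinearMap.ker (φ - σ) := by
        simp only [LinearMap.mem_ker, LinearMap.sub_apply]
        have := hx.apply_eq_smul
        show φ x - μ • x = 0
        rw [show φ x = φK x from rfl, this, sub_self]
      rw [h] at hxmem
      exact hx.2 (by simpa using hxmem)
    · exact h
  intro y
  have : y ∈ LinearMap.ker (φ - σ) := by rw [hker]; trivial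
  have := LinearMap.mem_ker.mp this
  have : φ y - μ • y = 0 := this
  rw [sub_eq_zero] at this; exact this

/-- Jacobson-density / Burnside: if `V` is a simple `B`-module, then for any independent
family `v` and arbitrary `w` there is `b ∈ B` matching. -/
lemma density (B : Subalgebra K (Module.End K V)) [Nontrivial V] [IsSimpleModule B V]
    {n : ℕ} (v : Fin n → V) (hv : LinearIndependent K v) (w : Fin n → V) :
    ∃ b ∈ B, ∀ i, b (v i) = w i := by
  classical
  haveI : IsSemisimpleModule B V := by
    apply IsSemisimpleModule.of_sSup_simples_eq_top
    apply top_unique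
    apply le_sSup
    show IsSimpleModule B (⊤ : Submodule B V)
    exact IsSimpleModule.congr Submodule.topEquiv
  haveI : IsSemisimpleModule B (Fin n → V) := by
    refine isSemisimpleModule_of_isSemisimpleModule_submodule'
      (p := fun i => LinearMap.range (LinearMap.single B (fun _ : Fin n => V) i)) ?_ ?_
    · intro i
      have e : V ≃ₗ[B] LinearMap.range (LinearMap.single B (fun _ : Fin n => V) i) :=
        LinearEquiv.ofInjective _ (by intro x y h; simpa using congrFun h i)
      exact IsSemisimpleModule.congr e.symm
    · exact LinearMap.iSup_range_single B _
  -- the orbit submodule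
  let N : Submodule B (Fin n → V) :=
    { carrier := Set.range (fun b : B => fun i => b • v i)
      add_mem' := by
        rintro _ _ ⟨b, rfl⟩ ⟨c, rfl⟩
        exact ⟨b + c, by funext i; exact add_smul b c (v i)⟩
      zero_mem' := ⟨0, by funext i; exact zero_smul _ (v i)⟩
      smul_mem' := by
        rintro c _ ⟨b, rfl⟩
        exact ⟨c * b, by funext i; exact mul_smul c b (v i)⟩ }

  obtain ⟨C, hC⟩ := exists_isCompl N
  let π : (Fin n → V) →ₗ[B] (Fin n → V) := N.subtype ∘ₗ N.linearProjOfIsCompl C hC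
  have hπ_mem : ∀ x, π x ∈ N := fun x => (N.linearProjOfIsCompl C hC x).2
  have hπ_fix : ∀ x ∈ N, π x = x := by
    intro x hx
    show (N.subtype) (N.linearProjOfIsCompl C hC x) = x
    rw [show N.linearProjOfIsCompl C hC x = ⟨x, hx⟩ from
      Submodule.linearProjOfIsCompl_apply_left hC ⟨x, hx⟩]
    rfl
  -- entries are scalars
  have entries : ∀ i j : Fin n, ∃ μ : K, ∀ x : V,
      π (LinearMap.single B (fun _ : Fin n => V) j x) i = μ • x := by
    intro i j
    obtain ⟨μ, hμ⟩ := schur_scalar B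
      ((LinearMap.proj i) ∘ₗ π ∘ₗ (LinearMap.single B (fun _ : Fin n => V) j))
    exact ⟨μ, fun x => hμ x⟩
  choose μ hμ using entries
  have expand : ∀ x : Fin n → V, ∀ i, π x i = ∑ j, μ i j • x j := by
    intro x i
    have hx : x = ∑ j, LinearMap.single B (fun _ : Fin n => V) j (x j) := by
      funext k
      simp [LinearMap.single_apply, Finset.sum_apply, Pi.single_apply]
    conv_lhs => rw [hx]
    rw [map_sum]
    simp only [Finset.sum_apply]
    exact Finset.sum_congr rfl fun j _ => hμ i j (x j)
  -- v itself is in N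
  have hvN : (v : Fin n → V) ∈ N := ⟨(1 : B), by funext i; exact one_smul _ (v i)⟩
  have hfix := hπ_fix v hvN
  have hid : ∀ i j, μ i j = if i = j then 1 else 0 := by
    intro i j
    have h1 : ∑ j, μ i j • v j = v i := by
      have := congrFun hfix i
      rw [expand v i] at this
      exact this
    have hdelta : ∑ k, (if i = k then (1:K) else 0) • v k = v i := by
      simp [ite_smul]
    have h2 : ∑ k, (μ i k - if i = k then 1 else 0) • v k = 0 := by
      simp only [sub_smul, Finset.sum_sub_distrib, h1, hdelta, sub_self]
    have h3 := (Fintype.linearIndependent_iff.mp hv) _ h2 j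
    exact sub_eq_zero.mp h3
  -- hence π = id and N = ⊤
  have hπ_id : ∀ x : Fin n → V, π x = x := by
    intro x
    funext i
    rw [expand]
    have : ∀ j, μ i j • x j = if i = j then x j else 0 := by
      intro j; rw [hid i j]; split <;> simp
    simp [this]
  have hNtop : N = ⊤ := by
    apply top_unique
    intro x _
    rw [← hπ_id x]
    exact hπ_mem x
  have hw : (w : Fin n → V) ∈ N := by rw [hNtop]; trivial
  obtain ⟨b, hb⟩ := hw
  exact ⟨(b : Module.End K V), b.2, fun i => congrFun hb i⟩

/-- In a simple situation, `B` contains an element of trace 1. -/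
lemma exists_trace_one (B : Subalgebra K (Module.End K V)) [Nontrivial V]
    [IsSimpleModule B V] : ∃ b ∈ B, LinearMap.trace K V b = 1 := by
  classical
  set n := finrank K V with hn
  have hpos : 0 < n := Module.finrank_pos
  let bV : Basis (Fin n) K V := Module.finBasis K V
  let i0 : Fin n := ⟨0, hpos⟩
  obtain ⟨b, hbB, hb⟩ := density B bV bV.linearIndependent
    (fun i => if i = i0 then bV i0 else 0)
  refine ⟨b, hbB, ?_⟩
  rw [LinearMap.trace_eq_matrix_trace K bV]
  have hdiag : ∀ i, (LinearMap.toMatrix bV bV b) i i = if i = i0 then 1 else 0 := by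
    intro i
    rw [LinearMap.toMatrix_apply, hb i]
    by_cases h : i = i0
    · subst h; simp
    · simp [h]
  rw [Matrix.trace]
  simp only [Matrix.diag]
  rw [Finset.sum_congr rfl (fun i _ => hdiag i)]
  simp

section helpers
variable {K : Type} [Field K] {V : Type} [AddCommGroup V] [Module K V]

lemma eig_unique [Nontrivial V] (x : Module.End K V) (μ ν : K)
    (h1 : IsNilpotent (x - μ • 1)) (h2 : IsNilpotent (x - ν • 1)) : μ = ν := by
  set u := x - μ • (1 : Module.End K V) with hu
  set w := x - ν • (1 : Module.End K V) with hw
  have hcomm : Commute w u := by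
    have h : w = u + (μ - ν) • (1 : Module.End K V) := by
      rw [hu, hw, sub_smul]; abel
    rw [h]
    exact ((Commute.refl u).add_left (((Commute.one_left u).smul_left _)))
  have hnil : IsNilpotent ((μ - ν) • (1 : Module.End K V)) := by
    have h : (μ - ν) • (1 : Module.End K V) = w - u := by
      rw [hu, hw, sub_smul]; abel
    rw [h]
    exact hcomm.isNilpotent_sub h2 h1
  obtain ⟨k, hk⟩ := hnil
  rw [smul_pow, one_pow] at hk
  obtain ⟨v, hv⟩ := exists_ne (0 : V)
  have : (μ - ν) ^ k • v = 0 := by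
    have := congrArg (fun (f : Module.End K V) => f v) hk
    simpa using this
  rcases smul_eq_zero.mp this with h | h
  · have h2 := pow_eq_zero_iff'.mp h
    exact sub_eq_zero.mp h2.1
  · exact absurd h hv

end helpers

section restrict
variable {K : Type} [Field K] {V : Type} [AddCommGroup V] [Module K V]
variable {W : Submodule K V}

lemma restrict_mul' (s t : Module.End K V) (hs : ∀ x ∈ W, s x ∈ W) (ht : ∀ x ∈ W, t x ∈ W) :
    (s * t).restrict (fun x hx => hs _ (ht x hx)) = s.restrict hs * t.restrict ht := by
  ext x
  simp [LinearMap.restrict_apply, Module.End.mul_apply]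

lemma restrict_add' (s t : Module.End K V) (hs : ∀ x ∈ W, s x ∈ W) (ht : ∀ x ∈ W, t x ∈ W) :
    (s + t).restrict (fun x hx => W.add_mem (hs x hx) (ht x hx)) = s.restrict hs + t.restrict ht := by
  ext x
  simp [LinearMap.restrict_apply]

lemma restrict_smul_one' (μ : K) :
    ((μ • 1 : Module.End K V)).restrict
      (fun x hx => by simpa using W.smul_mem μ hx : ∀ x ∈ W, (μ • 1 : Module.End K V) x ∈ W)
      = μ • 1 := by
  ext x
  simp [LinearMap.restrict_apply]

lemma restrict_sub_smul_one (t : Module.End K V) (ht : ∀ x ∈ W, t x ∈ W) (μ : K) :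
    (t - μ • 1).restrict
      (fun x hx => W.sub_mem (ht x hx) (by simpa using W.smul_mem μ hx)
        : ∀ x ∈ W, (t - μ • 1 : Module.End K V) x ∈ W)
      = t.restrict ht - μ • 1 := by
  ext x
  simp [LinearMap.restrict_apply]

lemma isNilpotent_restrict' (t : Module.End K V) (ht : ∀ x ∈ W, t x ∈ W)
    (h : IsNilpotent t) : IsNilpotent (t.restrict ht) := by
  obtain ⟨k, hk⟩ := h
  refine ⟨k, ?_⟩
  have := Module.End.pow_restrict (f' := t) (p := W) k ht
  rw [this]
  ext x
  simp [LinearMap.restrict_apply, hk]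

end restrict

end AuxQN

lemma eig_add_key (K : Type) [Field K] [IsAlgClosed K] :
    ∀ d : ℕ, ∀ (V : Type) [AddCommGroup V] [Module K V] [FiniteDimensional K V],
      finrank K V = d →
      ∀ (T : Set (Module.End K V)),
        (∀ x ∈ T, ∀ y ∈ T, x * y ∈ T) →
        (∀ x ∈ T, ∃ μ : K, IsNilpotent (x - μ • 1)) →
        ∀ f g, f ∈ T → g ∈ T → f + g ∈ T →
        ∀ γ δ : K, IsNilpotent (f - γ • 1) → IsNilpotent (g - δ • 1) →
        IsNilpotent (f + g - (γ + δ) • 1) := by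
  intro d
  induction d using Nat.strong_induction_on with
  | _ d IH =>
  intro V _ _ _ hV T hmul hq f g hf hg hfg γ δ hγ hδ
  rcases subsingleton_or_nontrivial V with hV0 | hV1
  · exact ⟨1, by ext v; exact Subsingleton.elim _ _⟩
  obtain ⟨ε, hε⟩ := hq _ hfg
  suffices hsuff : ε = γ + δ by rw [← hsuff]; exact hε
  -- trace of a quasi-nilpotent element
  have htr : ∀ (x : Module.End K V) (μ : K), IsNilpotent (x - μ • 1) →
      LinearMap.trace K V x = μ * (d : K) := by
    intro x μ hx
    have h0 : LinearMap.trace K V (x - μ • 1) = 0 :=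
      (LinearMap.isNilpotent_trace_of_isNilpotent hx).eq_zero
    rw [map_sub, map_smul, LinearMap.trace_one, hV] at h0
    rw [smul_eq_mul] at h0
    exact sub_eq_zero.mp h0
  by_cases hd : (d : K) = 0
  · -- characteristic divides the dimension
    by_cases hWex : ∃ W : Submodule K V, W ≠ ⊥ ∧ W ≠ ⊤ ∧ ∀ t ∈ T, ∀ x ∈ W, t x ∈ W
    · -- restrict to an invariant subspace and use the inductive hypothesis
      obtain ⟨W, hWbot, hWtop, hWinv⟩ := hWex
      haveI : Nontrivial ↥W := Submodule.nontrivial_iff_ne_bot.mpr hWbot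
      have hlt : finrank K ↥W < d := hV ▸ Submodule.finrank_lt hWtop
      set T' : Set (Module.End K ↥W) :=
        Set.range (fun tp : T => (tp : Module.End K V).restrict (hWinv tp tp.2)) with hT'
      have hmul' : ∀ x ∈ T', ∀ y ∈ T', x * y ∈ T' := by
        rintro _ ⟨s, rfl⟩ _ ⟨t, rfl⟩
        refine ⟨⟨s * t, hmul s s.2 t t.2⟩, ?_⟩
        exact (restrict_mul' (s : Module.End K V) t (hWinv s s.2) (hWinv t t.2)).symm
      have hq' : ∀ x ∈ T', ∃ μ : K, IsNilpotent (x - μ • 1) := by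
        rintro _ ⟨t, rfl⟩
        obtain ⟨μ, hμ⟩ := hq t t.2
        refine ⟨μ, ?_⟩
        rw [← restrict_sub_smul_one (t : Module.End K V) (hWinv t t.2) μ]
        exact isNilpotent_restrict' _ _ hμ
      have hrf : f.restrict (hWinv f hf) ∈ T' := ⟨⟨f, hf⟩, rfl⟩
      have hrg : g.restrict (hWinv g hg) ∈ T' := ⟨⟨g, hg⟩, rfl⟩
      have hsum : f.restrict (hWinv f hf) + g.restrict (hWinv g hg)
          = (f + g).restrict (hWinv _ hfg) := (restrict_add' f g _ _).symm
      have hrfg : f.restrict (hWinv f hf) + g.restrict (hWinv g hg) ∈ T' := by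
        rw [hsum]; exact ⟨⟨f + g, hfg⟩, rfl⟩
      have hγ' : IsNilpotent (f.restrict (hWinv f hf) - γ • 1) := by
        rw [← restrict_sub_smul_one f (hWinv f hf) γ]
        exact isNilpotent_restrict' _ _ hγ
      have hδ' : IsNilpotent (g.restrict (hWinv g hg) - δ • 1) := by
        rw [← restrict_sub_smul_one g (hWinv g hg) δ]
        exact isNilpotent_restrict' _ _ hδ
      have hkey := IH (finrank K ↥W) hlt ↥W rfl T' hmul' hq' _ _ hrf hrg hrfg γ δ hγ' hδ'
      have hε' : IsNilpotent (f.restrict (hWinv f hf) + g.restrict (hWinv g hg) - ε • 1) := by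
        rw [hsum, ← restrict_sub_smul_one (f + g) (hWinv _ hfg) ε]
        exact isNilpotent_restrict' _ _ hε
      exact eig_unique _ ε (γ + δ) hε' (by rw [← hsum] at *; exact hkey)
    · -- no invariant subspace : Burnside contradiction
      exfalso
      have hno : ∀ W : Submodule K V, (∀ t ∈ T, ∀ x ∈ W, t x ∈ W) → W = ⊥ ∨ W = ⊤ := by
        intro W hWi
        by_contra h
        push_neg at h
        exact hWex ⟨W, h.1, h.2, hWi⟩
      set S := Submodule.span K T with hSdef
      have hSS : ∀ x ∈ S, ∀ y ∈ S, x * y ∈ S := by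
        have hle : S * S ≤ S := by
          rw [hSdef, Submodule.span_mul_span]
          apply Submodule.span_le.mpr
          rintro _ ⟨x, hx, y, hy, rfl⟩
          exact Submodule.subset_span (hmul x hx y hy)
        exact fun x hx y hy => hle (Submodule.mul_mem_mul hx hy)
      -- the unital algebra S + K·1
      let B : Subalgebra K (Module.End K V) :=
        { carrier := {x | ∃ s ∈ S, ∃ c : K, x = s + c • 1}
          mul_mem' := by
            rintro x y ⟨s, hs, c, rfl⟩ ⟨t, ht, e, rfl⟩
            refine ⟨s * t + c • t + e • s, ?_, c * e, ?_⟩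
            · exact S.add_mem (S.add_mem (hSS s hs t ht) (S.smul_mem c ht)) (S.smul_mem e hs)
            · simp only [mul_add, add_mul, smul_mul_assoc, mul_smul_comm, one_mul, mul_one,
                smul_smul, smul_add]
              rw [mul_comm e c]
              abel
          one_mem' := ⟨0, S.zero_mem, 1, by simp⟩
          add_mem' := by
            rintro x y ⟨s, hs, c, rfl⟩ ⟨t, ht, e, rfl⟩
            refine ⟨s + t, S.add_mem hs ht, c + e, ?_⟩
            rw [add_smul]; abel
          zero_mem' := ⟨0, S.zero_mem, 0, by simp⟩
          algebraMap_mem' := fun c => ⟨0, S.zero_mem, c, by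
            simp [Algebra.algebraMap_eq_smul_one]⟩ }
      have hTB : ∀ t ∈ T, t ∈ B := fun t ht =>
        ⟨t, Submodule.subset_span ht, 0, by simp⟩
      -- V is a simple B-module
      haveI : Nontrivial (Submodule B V) := ⟨⊥, ⊤, by
        intro h
        obtain ⟨v, hv⟩ := exists_ne (0 : V)
        have hvmem : v ∈ (⊥ : Submodule B V) := h ▸ Submodule.mem_top
        exact hv (by simpa using hvmem)⟩
      haveI : IsSimpleModule B V := by
        refine { toIsSimpleOrder := ⟨fun p => ?_⟩ }
        let W : Submodule K V :=
          { carrier := p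
            add_mem' := fun h1 h2 => p.add_mem h1 h2
            zero_mem' := p.zero_mem
            smul_mem' := by
              intro c v hv
              have : (⟨algebraMap K (Module.End K V) c, B.algebraMap_mem c⟩ : B) • v ∈ p :=
                p.smul_mem _ hv
              simpa [Module.algebraMap_end_apply] using this }
        have hWinv : ∀ t ∈ T, ∀ x ∈ W, t x ∈ W := by
          intro t ht x hx
          exact p.smul_mem (⟨t, hTB t ht⟩ : B) hx
        rcases hno W hWinv with h | h
        · left; ext x
          simp only [Submodule.mem_bot]
          constructor
          · intro hx
            have : x ∈ W := hx
            rw [h] at this; simpa using this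
          · rintro rfl; exact p.zero_mem
        · right; ext x
          simp only [Submodule.mem_top, iff_true]
          have : x ∈ W := by rw [h]; trivial
          exact this
      obtain ⟨b, hbB, hb1⟩ := exists_trace_one B
      -- but every element of B has trace zero
      have hTtr : ∀ t ∈ T, LinearMap.trace K V t = 0 := by
        intro t ht
        obtain ⟨μ, hμ⟩ := hq t ht
        rw [htr t μ hμ, hd, mul_zero]
      have hStr : ∀ s ∈ S, LinearMap.trace K V s = 0 := by
        intro s hs
        have hle : S ≤ LinearMap.ker (LinearMap.trace K V) :=
          Submodule.span_le.mpr (fun t ht => LinearMap.mem_ker.mpr (hTtr t ht))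
        exact LinearMap.mem_ker.mp (hle hs)
      obtain ⟨s, hs, c, rfl⟩ := hbB
      rw [map_add, map_smul, LinearMap.trace_one, hStr s hs, hV, smul_eq_mul, hd,
        mul_zero, add_zero] at hb1
      exact zero_ne_one hb1
  · -- the characteristic does not divide the dimension : use traces
    have h1 := htr f γ hγ
    have h2 := htr g δ hδ
    have h3 := htr (f + g) ε hε
    rw [map_add, h1, h2] at h3
    have h4 : (γ + δ) * (d : K) = ε * (d : K) := by rw [add_mul]; exact h3
    exact (mul_right_cancel₀ hd h4).symm

open scoped TensorProduct

noncomputable section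
/-- An endomorphism `g` of a finite-dimensional `F`-vector space is quasi-nilpotent:
for some `γ` in the algebraic closure of `F`, the base change of `g` minus `γ·id`
is nilpotent (equivalently, all eigenvalues of `g` are equal to `γ`). -/
def IsQuasiNilp (F : Type) [Field F] (U : Type) [AddCommGroup U] [Module F U]
    (g : U →ₗ[F] U) : Prop :=
  ∃ γ : AlgebraicClosure F,
    IsNilpotent (LinearMap.baseChange (AlgebraicClosure F) g
      - γ • (1 : Module.End (AlgebraicClosure F) (AlgebraicClosure F ⊗[F] U)))

/-- Let `A` be a quasi-nilpotent (not necessarily unital) subalgebra of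
`End_F(U)`, `U` finite-dimensional. If `a, b ∈ A` and `γ, δ` in the algebraic closure
of `F` are such that (base change of `a`) − `γ·id` and (base change of `b`) − `δ·id`
are nilpotent, then (base change of `a + b`) − `(γ + δ)·id` is nilpotent; i.e.
`eig(a+b) = eig(a) + eig(b)` on `A`. -/
theorem eig_add (F : Type) [Field F] (U : Type) [AddCommGroup U] [Module F U]
    [FiniteDimensional F U]
    (A : NonUnitalSubalgebra F (Module.End F U))
    (hA : ∀ x ∈ A, IsQuasiNilp F U x)
    (a b : Module.End F U) (ha : a ∈ A) (hb : b ∈ A)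
    (γ δ : AlgebraicClosure F)
    (hγ : IsNilpotent (LinearMap.baseChange (AlgebraicClosure F) a
      - γ • (1 : Module.End (AlgebraicClosure F) (AlgebraicClosure F ⊗[F] U))))
    (hδ : IsNilpotent (LinearMap.baseChange (AlgebraicClosure F) b
      - δ • (1 : Module.End (AlgebraicClosure F) (AlgebraicClosure F ⊗[F] U)))) :
    IsNilpotent (LinearMap.baseChange (AlgebraicClosure F) (a + b)
      - (γ + δ) • (1 : Module.End (AlgebraicClosure F) (AlgebraicClosure F ⊗[F] U))) := by
  classical
  have hbc_mul : ∀ x y : Module.End F U,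
      LinearMap.baseChange (AlgebraicClosure F) (x * y)
        = LinearMap.baseChange (AlgebraicClosure F) x
          * LinearMap.baseChange (AlgebraicClosure F) y := by
    intro x y
    ext v
    simp [Module.End.mul_apply]
  set T : Set (Module.End (AlgebraicClosure F) (AlgebraicClosure F ⊗[F] U)) :=
    (LinearMap.baseChange (AlgebraicClosure F)) '' (A : Set (Module.End F U)) with hT
  have hmul : ∀ x ∈ T, ∀ y ∈ T, x * y ∈ T := by
    rintro _ ⟨x, hx, rfl⟩ _ ⟨y, hy, rfl⟩
    exact ⟨x * y, mul_mem hx hy, hbc_mul x y⟩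
  have hq : ∀ x ∈ T, ∃ μ : AlgebraicClosure F, IsNilpotent (x - μ • 1) := by
    rintro _ ⟨x, hx, rfl⟩
    exact hA x hx
  have hfg : LinearMap.baseChange (AlgebraicClosure F) a
      + LinearMap.baseChange (AlgebraicClosure F) b ∈ T := by
    rw [← LinearMap.baseChange_add]
    exact ⟨a + b, add_mem ha hb, rfl⟩
  have key := eig_add_key (AlgebraicClosure F)
    (Module.finrank (AlgebraicClosure F) (AlgebraicClosure F ⊗[F] U))
    (AlgebraicClosure F ⊗[F] U) rfl T hmul hq
    (LinearMap.baseChange (AlgebraicClosure F) a)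
    (LinearMap.baseChange (AlgebraicClosure F) b)
    ⟨a, ha, rfl⟩ ⟨b, hb, rfl⟩ hfg γ δ hγ hδ
  rw [← LinearMap.baseChange_add] at key
  exact key

end
end

section
/- Let F be a finite field and U a finite-dimensional F-vector space. If an endomorphism a ∈ End_F(U) is quasi-nilpotent, i.e., its characteristic polynomial factors over the algebraic closure F̄ as (X − γ)^N for some γ ∈ F̄ (where N = dim U), then γ lies in F; that is, there exists c ∈ F such that a − c·id is nilpotent as an endomorphism of U. -/
open scoped TensorProduct

noncomputable section

open Polynomial Module

/-- Auxiliary: characteristic polynomial of a shifted matrix. -/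
lemma aux_charpoly_shift_matrix {n : Type*} [Fintype n] [DecidableEq n] {R : Type*} [CommRing R]
    (M : Matrix n n R) (γ : R) :
    (M - γ • (1 : Matrix n n R)).charpoly = M.charpoly.comp (X + C γ) := by
  rw [Matrix.charpoly, Matrix.charpoly, comp_eq_aeval, AlgHom.map_det]
  congr 1
  refine Matrix.ext fun i j => ?_
  rw [AlgHom.mapMatrix_apply, Matrix.map_apply]
  by_cases h : i = j
  · subst h
    simp only [Matrix.charmatrix_apply_eq, Matrix.sub_apply, Matrix.smul_apply,
      Matrix.one_apply_eq, smul_eq_mul, mul_one, map_sub, aeval_X, aeval_C,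
      Polynomial.algebraMap_eq, C_sub]
    ring
  · rw [Matrix.charmatrix_apply_ne _ _ _ h, Matrix.charmatrix_apply_ne _ _ _ h, Matrix.sub_apply,
      Matrix.smul_apply, Matrix.one_apply_ne h, smul_eq_mul, mul_zero, sub_zero, map_neg, aeval_C,
      Polynomial.algebraMap_eq]

/-- Auxiliary: characteristic polynomial of an endomorphism recovered from the shifted one. -/
lemma aux_end_charpoly_shift {K V : Type*} [Field K] [AddCommGroup V] [Module K V]
    [FiniteDimensional K V] (φ : Module.End K V) (γ : K) :
    φ.charpoly = ((φ - γ • (1 : Module.End K V)).charpoly).comp (X - C γ) := by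
  classical
  let b := Module.Free.chooseBasis K V
  have h1 : (LinearMap.toMatrix b b) (φ - γ • (1 : Module.End K V)) =
      (LinearMap.toMatrix b b) φ - γ • (1 : Matrix _ _ K) := by
    rw [map_sub, map_smul]
    congr 1
    simp [Module.End.one_eq_id, LinearMap.toMatrix_id]
  rw [← LinearMap.charpoly_toMatrix φ b, ← LinearMap.charpoly_toMatrix _ b, h1,
    aux_charpoly_shift_matrix, comp_assoc]
  simp [add_comp, X_comp, C_comp, sub_add_cancel]

/-- Auxiliary: an element of a field extension of a finite field `F` fixed by `x ↦ x ^ |F|`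
comes from `F`. -/
lemma aux_mem_range_of_pow_card {F K : Type*} [Field F] [Fintype F] [Field K] [Algebra F K]
    {γ : K} (h : γ ^ Fintype.card F = γ) : ∃ c : F, algebraMap F K c = γ := by
  classical
  have h1 : 1 < Fintype.card F := Fintype.one_lt_card
  have hmonic : ((X : F[X]) ^ Fintype.card F - X).Monic := by
    refine monic_X_pow_sub ?_
    rw [degree_X]
    exact_mod_cast h1
  have hroots : ((X : F[X]) ^ Fintype.card F - X).roots = Finset.univ.val :=
    FiniteField.roots_X_pow_card_sub_X F
  have hcard : ((X : F[X]) ^ Fintype.card F - X).roots.card =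
      ((X : F[X]) ^ Fintype.card F - X).natDegree := by
    rw [hroots, FiniteField.X_pow_card_sub_X_natDegree_eq F h1]
    exact Finset.card_univ
  have hprod := prod_multiset_X_sub_C_of_monic_of_roots_card_eq hmonic hcard
  have heval : (((X : F[X]) ^ Fintype.card F - X).map (algebraMap F K)).eval γ = 0 := by
    simp [h]
  rw [← hprod, Polynomial.map_multiset_prod, Multiset.map_map, eval_multiset_prod,
    Multiset.map_map] at heval
  have hmem := Multiset.prod_eq_zero_iff.mp heval
  rw [Multiset.mem_map] at hmem
  obtain ⟨c, -, hc0⟩ := hmem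
  refine ⟨c, ?_⟩
  simp only [Function.comp_apply, Polynomial.map_sub, map_X, map_C, eval_sub, eval_X,
    eval_C] at hc0
  exact (sub_eq_zero.mp hc0).symm

/-- Over a finite field `F`, if an endomorphism `a` of a
finite-dimensional `F`-vector space `U` is quasi-nilpotent (its base change to the
algebraic closure minus `γ·id` is nilpotent for some `γ ∈ F̄`, equivalently its
characteristic polynomial is `(X - γ)^N` over `F̄`), then the eigenvalue `γ` already
lies in `F`: there exists `c ∈ F` with `a - c·id` nilpotent as an endomorphism of `U`. -/
theorem eig_mem_of_finite_field (F : Type) [Field F] [Fintype F]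
    (U : Type) [AddCommGroup U] [Module F U] [FiniteDimensional F U]
    (a : Module.End F U) (ha : IsQuasiNilp F U a) :
    ∃ c : F, IsNilpotent (a - c • (1 : Module.End F U)) := by
  classical
  rcases subsingleton_or_nontrivial U with hU | hU
  · exact ⟨0, 1, Subsingleton.elim _ _⟩
  obtain ⟨γ, hnil⟩ := ha
  -- characteristic and Frobenius setup
  obtain ⟨e, hp, hcard⟩ := FiniteField.card F (ringChar F)
  haveI : Fact (ringChar F).Prime := ⟨hp⟩
  haveI : CharP (AlgebraicClosure F) (ringChar F) :=
    charP_of_injective_algebraMap (algebraMap F (AlgebraicClosure F)).injective (ringChar F)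
  set φ : AlgebraicClosure F →+* AlgebraicClosure F :=
    iterateFrobenius (AlgebraicClosure F) (ringChar F) (e : ℕ) with hφdef
  have hφ : ∀ x : AlgebraicClosure F, φ x = x ^ Fintype.card F := by
    intro x
    rw [hφdef, iterateFrobenius_def, hcard]
  -- base change and its characteristic polynomial
  set b := LinearMap.baseChange (AlgebraicClosure F) a with hbdef
  set N := Module.finrank (AlgebraicClosure F) (AlgebraicClosure F ⊗[F] U) with hN
  have hb : (b - γ • (1 : Module.End (AlgebraicClosure F) (AlgebraicClosure F ⊗[F] U))).charpoly
      = X ^ N := IsNilpotent.charpoly_eq_X_pow_finrank hnil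
  have hkey : (LinearMap.charpoly a).map (algebraMap F (AlgebraicClosure F)) = (X - C γ) ^ N := by
    rw [← LinearMap.charpoly_baseChange, ← hbdef, aux_end_charpoly_shift b γ, hb]
    simp [pow_comp, X_comp]
  -- the dimension over the closure equals the dimension over F, and is positive
  have hdeg : N = Module.finrank F U := by
    have h := congrArg natDegree hkey
    rw [(LinearMap.charpoly_monic a).natDegree_map, LinearMap.charpoly_natDegree,
      natDegree_pow, natDegree_X_sub_C, mul_one] at h
    exact h.symm
  have hN0 : N ≠ 0 := by
    rw [hdeg]
    exact (Module.finrank_pos (R := F) (M := U)).ne'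
  -- Frobenius fixes the mapped characteristic polynomial
  have hfix : ((LinearMap.charpoly a).map (algebraMap F (AlgebraicClosure F))).map φ = (LinearMap.charpoly a).map (algebraMap F (AlgebraicClosure F)) := by
    rw [Polynomial.map_map]
    congr 1
    ext c
    rw [RingHom.comp_apply, hφ, ← map_pow, FiniteField.pow_card]
  -- γ ^ q is also a root, hence γ ^ q = γ
  have h0 : ((LinearMap.charpoly a).map (algebraMap F (AlgebraicClosure F))).eval γ = 0 := by
    rw [hkey]
    simp [eval_pow, zero_pow hN0]
  have h1 : ((LinearMap.charpoly a).map (algebraMap F (AlgebraicClosure F))).eval (γ ^ Fintype.card F) = 0 := by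
    have h2 : ((LinearMap.charpoly a).map (algebraMap F (AlgebraicClosure F))).eval (φ γ)
        = φ (((LinearMap.charpoly a).map (algebraMap F (AlgebraicClosure F))).eval γ) := by
      conv_lhs => rw [← hfix]
      rw [eval_map, eval₂_hom]
    rw [hφ] at h2
    rw [h2, h0, map_zero]
  have hroot : (γ ^ Fintype.card F - γ) ^ N = 0 := by
    rw [hkey] at h1
    simpa [eval_pow] using h1
  have hγq : γ ^ Fintype.card F = γ := sub_eq_zero.mp (pow_eq_zero_iff hN0 |>.mp hroot)
  -- hence γ comes from F
  obtain ⟨c, hc⟩ := aux_mem_range_of_pow_card (F := F) (K := AlgebraicClosure F) hγq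
  refine ⟨c, ?_⟩
  -- characteristic polynomial argument over F
  rw [LinearMap.isNilpotent_iff_charpoly]
  apply Polynomial.map_injective (algebraMap F (AlgebraicClosure F)) (algebraMap F (AlgebraicClosure F)).injective
  have hbc : LinearMap.baseChange (AlgebraicClosure F) (a - c • (1 : Module.End F U)) =
      b - γ • (1 : Module.End (AlgebraicClosure F) (AlgebraicClosure F ⊗[F] U)) := by
    rw [LinearMap.baseChange_sub, LinearMap.baseChange_smul, LinearMap.baseChange_one]
    rw [← hc]
    congr 1
    exact (algebraMap_smul (AlgebraicClosure F) c
      (1 : Module.End (AlgebraicClosure F) (AlgebraicClosure F ⊗[F] U))).symm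
  rw [← LinearMap.charpoly_baseChange, hbc, hb, Polynomial.map_pow, Polynomial.map_X, hdeg]

end
end

section
/- Let Γ be a finite graph without self-loops on vertex set V with Cartan matrix A = (a_{uv}), let C be the fundamental set and W the Weyl group of Γ. Then the set Δ₊ⁱᵐ = W·C is contained in Q_+, and (β|β) ≤ 0 (in particular (β|β) ∈ ℤ_{≤0}) for every β ∈ Δ₊ⁱᵐ. -/
open scoped TensorProduct

noncomputable section
/-- The Cartan matrix of the underlying graph of a quiver `(V, E, s, t)`:
`2` on the diagonal, and minus the number of edges joining `u` and `v` off the diagonal. -/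
noncomputable def cartan {V E : Type} (s t : E → V) (u v : V) : ℤ :=
  open Classical in
  if u = v then 2
  else -(Nat.card {e : E // (s e = u ∧ t e = v) ∨ (s e = v ∧ t e = u)} : ℤ)

/-- The reflection `r_v` associated to a symmetric integer matrix `a`:
`r_v(β) = β - (Σ_u a u v * β u) α_v`, extending `r_v(α_u) = α_u - a u v • α_v`. -/
noncomputable def reflMat {V : Type} [Fintype V] (a : V → V → ℤ) (v : V) (β : V → ℤ) :
    V → ℤ :=
  open Classical in
  fun w => β w - (if w = v then ∑ u, a u v * β u else 0)

/-- The orbit of `β` under the Weyl group generated by the reflections `r_v`. -/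
def weylOrbit {V : Type} [Fintype V] (a : V → V → ℤ) (β : V → ℤ) : Set (V → ℤ) :=
  { γ | ∃ l : List V, γ = l.foldr (reflMat a) β }

/-- The graph on `V` whose adjacency is given by a nonzero off-diagonal entry of `a`. -/
def graphOfMat {V : Type} (a : V → V → ℤ) : SimpleGraph V where
  Adj u v := u ≠ v ∧ (a u v ≠ 0 ∨ a v u ≠ 0)
  symm := by constructor; intro u v h; exact ⟨h.1.symm, h.2.symm⟩
  loopless := by constructor; intro v h; exact h.1 rfl

/-- The fundamental set `C`: nonzero `β ∈ Q_+` with `(β | α_v) ≤ 0` for all `v`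
(equivalently `Σ_u a u v * β u ≤ 0`) and connected support. -/
def fundSetMat {V : Type} [Fintype V] (a : V → V → ℤ) : Set (V → ℤ) :=
  { β | (∀ v, 0 ≤ β v) ∧ β ≠ 0 ∧ (∀ v, ∑ u, a u v * β u ≤ 0) ∧
      ((graphOfMat a).induce {v | β v ≠ 0}).Connected }

/-- The set of positive real roots `Δ₊ʳᵉ = ⋃_v (W·α_v ∩ Q_+)`. -/
noncomputable def posRootsRe {V : Type} [Fintype V] (a : V → V → ℤ) : Set (V → ℤ) :=
  open Classical in
  ⋃ v : V, (weylOrbit a (Pi.single v 1) ∩ {β | ∀ u, 0 ≤ β u})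

/-- The set of positive imaginary roots `Δ₊ⁱᵐ = W·C`. -/
def posRootsIm {V : Type} [Fintype V] (a : V → V → ℤ) : Set (V → ℤ) :=
  ⋃ β ∈ fundSetMat a, weylOrbit a β

/-- The set of positive roots `Δ₊ = Δ₊ʳᵉ ∪ Δ₊ⁱᵐ`. -/
noncomputable def posRoots {V : Type} [Fintype V] (a : V → V → ℤ) : Set (V → ℤ) :=
  posRootsRe a ∪ posRootsIm a

/-- Twice the bilinear form: `bform2 a β γ = 2(β|γ) = Σ_{u,v} a u v * β u * γ v`. -/
def bform2 {V : Type} [Fintype V] (a : V → V → ℤ) (β γ : V → ℤ) : ℤ :=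
  ∑ u, ∑ v, a u v * β u * γ v

set_option linter.unusedSectionVars false
namespace Stmt14
open Classical

variable {V : Type} [Fintype V]

/-- The basis vector `α_v` as a function. -/
noncomputable def dd (v : V) : V → ℤ := fun w => if w = v then 1 else 0

variable (a : V → V → ℤ)

/-- The reflection coefficient `S v β = 2(β|α_v) = Σ_u a u v β u`. -/
def S (v : V) (β : V → ℤ) : ℤ := ∑ u, a u v * β u

/-- Word product: `wp l = r_{l₁} ∘ ... ∘ r_{l_k}`. -/
noncomputable def wp (l : List V) (β : V → ℤ) : V → ℤ := l.foldr (reflMat a) β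

lemma dd_self (v : V) : dd v v = 1 := by simp [dd]

lemma dd_ne {v w : V} (h : w ≠ v) : dd v w = 0 := by simp [dd, h]

lemma reflMat_apply (v : V) (β : V → ℤ) (w : V) :
    reflMat a v β w = β w - S a v β * dd v w := by
  by_cases h : w = v <;> simp [reflMat, S, dd, h]

lemma S_add (v : V) (β γ : V → ℤ) : S a v (β + γ) = S a v β + S a v γ := by
  simp [S, mul_add, Finset.sum_add_distrib]

lemma S_smul (v : V) (c : ℤ) (β : V → ℤ) : S a v (c • β) = c * S a v β := by
  simp [S, Finset.mul_sum]; apply Finset.sum_congr rfl; intros; ring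

lemma S_dd (v u : V) : S a v (dd u) = a u v := by
  simp [S, dd, mul_ite]

lemma reflMat_add (v : V) (β γ : V → ℤ) :
    reflMat a v (β + γ) = reflMat a v β + reflMat a v γ := by
  funext w; simp [reflMat_apply, S_add]; ring

lemma reflMat_smul (v : V) (c : ℤ) (β : V → ℤ) :
    reflMat a v (c • β) = c • reflMat a v β := by
  funext w
  simp only [reflMat_apply, Pi.smul_apply, smul_eq_mul, S_smul]
  ring

lemma reflMat_invol (hdiag : ∀ v, a v v = 2) (v : V) (β : V → ℤ) :
    reflMat a v (reflMat a v β) = β := by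
  have hS : S a v (reflMat a v β) = - S a v β := by
    have : reflMat a v β = β + (- S a v β) • dd v := by
      funext w; simp [reflMat_apply]; ring
    rw [this, S_add, S_smul, S_dd, hdiag]; ring
  funext w
  rw [reflMat_apply, hS, reflMat_apply]; ring

lemma wp_nil (β : V → ℤ) : wp a [] β = β := rfl

lemma wp_cons (x : V) (l : List V) (β : V → ℤ) :
    wp a (x :: l) β = reflMat a x (wp a l β) := rfl

lemma wp_append (l₁ l₂ : List V) (β : V → ℤ) :
    wp a (l₁ ++ l₂) β = wp a l₁ (wp a l₂ β) := by
  simp [wp, List.foldr_append]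

lemma wp_concat (l : List V) (x : V) (β : V → ℤ) :
    wp a (l ++ [x]) β = wp a l (reflMat a x β) := by
  rw [wp_append]; rfl

lemma wp_add (l : List V) (β γ : V → ℤ) : wp a l (β + γ) = wp a l β + wp a l γ := by
  induction l with
  | nil => rfl
  | cons x l ih => rw [wp_cons, wp_cons, wp_cons, ih, reflMat_add]

lemma wp_smul (l : List V) (c : ℤ) (β : V → ℤ) : wp a l (c • β) = c • wp a l β := by
  induction l with
  | nil => rfl
  | cons x l ih => rw [wp_cons, wp_cons, ih, reflMat_smul]

lemma wp_zero (l : List V) : wp a l 0 = 0 := by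
  have := wp_smul a l 0 0; simpa using this

lemma wp_reverse (hdiag : ∀ v, a v v = 2) (l : List V) (β : V → ℤ) :
    wp a l.reverse (wp a l β) = β := by
  induction l generalizing β with
  | nil => rfl
  | cons x l ih =>
      rw [wp_cons, List.reverse_cons, wp_concat, reflMat_invol a hdiag, ih]

lemma wp_injective (hdiag : ∀ v, a v v = 2) (l : List V) {β γ : V → ℤ}
    (h : wp a l β = wp a l γ) : β = γ := by
  calc β = wp a l.reverse (wp a l β) := (wp_reverse a hdiag l β).symm
    _ = wp a l.reverse (wp a l γ) := by rw [h]
    _ = γ := wp_reverse a hdiag l γ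

lemma wp_dd_ne_zero (hdiag : ∀ v, a v v = 2) (l : List V) (v : V) :
    wp a l (dd v) ≠ 0 := by
  intro h
  have : dd v = (0 : V → ℤ) := wp_injective a hdiag l (by rw [h, wp_zero])
  have := congrFun this v
  simp [dd_self] at this

lemma bform2_eq_sum_S (β γ : V → ℤ) : bform2 a β γ = ∑ v, S a v β * γ v := by
  rw [bform2, Finset.sum_comm]
  apply Finset.sum_congr rfl; intro v _
  rw [S, Finset.sum_mul]

lemma bform2_dd_right (β : V → ℤ) (v : V) : bform2 a β (dd v) = S a v β := by
  rw [bform2_eq_sum_S]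
  simp [dd, mul_ite]

lemma bform2_symm (hsym : ∀ u v, a u v = a v u) (β γ : V → ℤ) :
    bform2 a β γ = bform2 a γ β := by
  rw [bform2, bform2, Finset.sum_comm]
  apply Finset.sum_congr rfl; intro v _
  apply Finset.sum_congr rfl; intro u _
  rw [hsym u v]; ring

lemma bform2_dd_left (hsym : ∀ u v, a u v = a v u) (γ : V → ℤ) (v : V) :
    bform2 a (dd v) γ = S a v γ := by
  rw [bform2_symm a hsym, bform2_dd_right]

lemma bform2_add_left (β β' γ : V → ℤ) :
    bform2 a (β + β') γ = bform2 a β γ + bform2 a β' γ := by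
  simp only [bform2_eq_sum_S, S_add, ← Finset.sum_add_distrib]
  apply Finset.sum_congr rfl; intros; ring

lemma bform2_smul_left (c : ℤ) (β γ : V → ℤ) :
    bform2 a (c • β) γ = c * bform2 a β γ := by
  simp only [bform2_eq_sum_S, S_smul, Finset.mul_sum]
  apply Finset.sum_congr rfl; intros; ring

lemma bform2_add_right (hsym : ∀ u v, a u v = a v u) (β γ γ' : V → ℤ) :
    bform2 a β (γ + γ') = bform2 a β γ + bform2 a β γ' := by
  rw [bform2_symm a hsym, bform2_add_left, bform2_symm a hsym γ β, bform2_symm a hsym γ' β]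

lemma bform2_smul_right (hsym : ∀ u v, a u v = a v u) (c : ℤ) (β γ : V → ℤ) :
    bform2 a β (c • γ) = c * bform2 a β γ := by
  rw [bform2_symm a hsym, bform2_smul_left, bform2_symm a hsym γ β]

lemma reflMat_eq (v : V) (β : V → ℤ) :
    reflMat a v β = β + (- S a v β) • dd v := by
  funext w; simp [reflMat_apply]; ring

lemma bform2_reflMat (hsym : ∀ u v, a u v = a v u) (hdiag : ∀ v, a v v = 2)
    (v : V) (β γ : V → ℤ) :
    bform2 a (reflMat a v β) (reflMat a v γ) = bform2 a β γ := by
  rw [reflMat_eq a v β, reflMat_eq a v γ]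
  rw [bform2_add_left, bform2_smul_left, bform2_add_right a hsym, bform2_add_right a hsym,
    bform2_smul_right a hsym, bform2_smul_right a hsym, bform2_dd_right, bform2_dd_left a hsym,
    bform2_dd_right, S_dd, hdiag]
  ring

lemma bform2_wp (hsym : ∀ u v, a u v = a v u) (hdiag : ∀ v, a v v = 2)
    (l : List V) (β γ : V → ℤ) :
    bform2 a (wp a l β) (wp a l γ) = bform2 a β γ := by
  induction l with
  | nil => rfl
  | cons x l ih => rw [wp_cons, wp_cons, bform2_reflMat a hsym hdiag, ih]

/-- Reflection in an arbitrary vector `γ` (of squared norm 2). -/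
noncomputable def rf (γ β : V → ℤ) : V → ℤ := β - bform2 a β γ • γ

lemma reflMat_eq_rf (v : V) (β : V → ℤ) : reflMat a v β = rf a (dd v) β := by
  funext w
  simp [rf, reflMat_apply, bform2_dd_right]

lemma wp_sub (l : List V) (β γ : V → ℤ) : wp a l (β - γ) = wp a l β - wp a l γ := by
  have h : β - γ = β + (-1 : ℤ) • γ := by funext w; simp; ring
  rw [h, wp_add, wp_smul]; funext w; simp; ring

lemma wp_rf (hsym : ∀ u v, a u v = a v u) (hdiag : ∀ v, a v v = 2)
    (l : List V) (γ β : V → ℤ) :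
    wp a l (rf a γ β) = rf a (wp a l γ) (wp a l β) := by
  rw [rf, wp_sub, wp_smul, rf, bform2_wp a hsym hdiag]

lemma reflMat_dd_self (hdiag : ∀ v, a v v = 2) (v : V) :
    reflMat a v (dd v) = (-1 : ℤ) • dd v := by
  funext w; simp [reflMat_apply, S_dd, hdiag]; ring

lemma reflMat_dd_ne (u v : V) (h : u ≠ v) :
    reflMat a v (dd u) = dd u + (- a u v) • dd v := by
  funext w; simp [reflMat_apply, S_dd]; ring

/-- Conjugation: if `wp l (dd v) = dd u` then `wp l ∘ r_v = r_u ∘ wp l`. -/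
lemma wp_conj (hsym : ∀ u v, a u v = a v u) (hdiag : ∀ v, a v v = 2)
    {l : List V} {v u : V} (h : wp a l (dd v) = dd u) (β : V → ℤ) :
    wp a l (reflMat a v β) = reflMat a u (wp a l β) := by
  rw [reflMat_eq_rf, wp_rf a hsym hdiag, h, reflMat_eq_rf]

/-- Any word can be replaced by an alternating word of no greater length with the same action. -/
lemma alt_reduce (hdiag : ∀ v, a v v = 2) (u : List V) :
    ∃ u₁ : List V, u₁.length ≤ u.length ∧ wp a u₁ = wp a u ∧
      u₁.Chain' (· ≠ ·) ∧ ∀ c ∈ u₁, c ∈ u := by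
  induction u with
  | nil => exact ⟨[], le_rfl, rfl, List.isChain_nil, by simp⟩
  | cons x u₀ ih =>
      obtain ⟨u₁, hlen, hwp, hch, hsub⟩ := ih
      match u₁, hch with
      | [], _ =>
          refine ⟨[x], by simp, ?_, List.isChain_singleton x, by simp⟩
          funext β
          show reflMat a x (wp a [] β) = wp a (x :: u₀) β
          rw [wp_cons, ← congrFun hwp β]
      | b :: v, hch =>
          by_cases hxb : x = b
          · refine ⟨v, ?_, ?_, hch.tail, ?_⟩
            · simp at hlen ⊢; omega
            · funext β
              have h1 : wp a (x :: u₀) β = reflMat a x (wp a (b :: v) β) := by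
                rw [wp_cons, ← congrFun hwp β]
              rw [h1, wp_cons, hxb, reflMat_invol a hdiag]
            · intro c hc; exact List.mem_cons_of_mem x (hsub c (List.mem_cons_of_mem b hc))
          · refine ⟨x :: b :: v, by simpa using hlen, ?_, ?_, ?_⟩
            · funext β
              rw [wp_cons a x u₀, ← congrFun hwp β]
              rfl
            · exact List.isChain_cons_cons.2 ⟨hxb, hch⟩
            · intro c hc
              rcases List.mem_cons.1 hc with h | h
              · exact h ▸ (List.mem_cons_self (a := x) (l := u₀))
              · exact List.mem_cons_of_mem x (hsub c h)

/-- Commutation when `a s t = 0`. -/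
lemma refl_comm (hsym : ∀ u v, a u v = a v u) (hdiag : ∀ v, a v v = 2) {s t : V} (hst : s ≠ t) (h0 : a t s = 0) (β : V → ℤ) :
    reflMat a s (reflMat a t β) = reflMat a t (reflMat a s β) := by
  have h : wp a [s] (dd t) = dd t := by
    show reflMat a s (dd t) = dd t
    rw [reflMat_dd_ne a t s (Ne.symm hst), h0]
    funext w; simp
  have := wp_conj a hsym hdiag h β
  simpa [wp_cons, wp_nil] using this

/-- Braid relation when `a s t = a t s = -1`. -/
lemma refl_braid (hsym : ∀ u v, a u v = a v u) (hdiag : ∀ v, a v v = 2) {s t : V} (hst : s ≠ t) (hts : a t s = -1) (hstv : a s t = -1) (β : V → ℤ) :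
    reflMat a s (reflMat a t (reflMat a s β)) = reflMat a t (reflMat a s (reflMat a t β)) := by
  have key : ∀ x y : V, x ≠ y → a y x = -1 → ∀ γ : V → ℤ,
      reflMat a x (reflMat a y (reflMat a x γ)) = rf a (dd x + dd y) γ := by
    intro x y hxy hyx γ
    have h : wp a [x] (dd y) = dd x + dd y := by
      show reflMat a x (dd y) = dd x + dd y
      rw [reflMat_dd_ne a y x (Ne.symm hxy), hyx]
      funext w; simp [dd]; ring
    have h3 : reflMat a x (reflMat a y (reflMat a x γ))
        = rf a (dd x + dd y) (reflMat a x (reflMat a x γ)) := by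
      have := wp_rf a hsym hdiag [x] (dd y) (reflMat a x γ)
      rw [reflMat_eq_rf a y (reflMat a x γ)]
      simpa [wp_cons, wp_nil, h] using this
    rw [h3, reflMat_invol a hdiag]
  rw [key s t hst hts β, key t s (Ne.symm hst) hstv β]
  have : dd s + dd t = dd t + dd s := by funext w; simp; ring
  rw [this]

/-- Positivity in the infinite dihedral case `m ≥ 2`: an alternating word whose rightmost
letter is `t` sends `α_s` to a nonnegative combination, dominated on the side of the head. -/
lemma pos_alt (hdiag : ∀ v, a v v = 2) {s t : V} (hst : s ≠ t) {m : ℤ} (hm : 2 ≤ m)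
    (hts : a t s = -m) (hstv : a s t = -m) :
    ∀ u : List V, (∀ c ∈ u, c = s ∨ c = t) → u.Chain' (· ≠ ·) →
      (u = [] ∨ u.getLast? = some t) →
      ∃ az bz : ℤ, 0 ≤ az ∧ 0 ≤ bz ∧ wp a u (dd s) = az • dd s + bz • dd t ∧
        (u.head? = some s → bz ≤ az) ∧ (u.head? = some t → az ≤ bz) ∧
        (u = [] → bz ≤ az) := by
  intro u
  induction u with
  | nil =>
      intro _ _ _
      refine ⟨1, 0, by norm_num, le_rfl, ?_, by simp, by simp, by intro; norm_num⟩
      funext w; simp [wp_nil]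
  | cons x u₀ ih =>
      intro hmem hch hlast
      have hx : x = s ∨ x = t := hmem x (List.mem_cons_self (a := x) (l := u₀))
      obtain ⟨az, bz, haz, hbz, heq, hhs, hht, hnil⟩ :=
        ih (fun c hc => hmem c (List.mem_cons_of_mem x hc)) hch.tail
          (by
            rcases u₀ with _ | ⟨y, u₀'⟩
            · exact Or.inl rfl
            · right
              rcases hlast with h | h
              · exact absurd h (by simp)
              · rw [List.getLast?_cons_cons] at h
                exact h)
      have hwpx : wp a (x :: u₀) (dd s) = az • reflMat a x (dd s) + bz • reflMat a x (dd t) := by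
        rw [wp_cons, heq, reflMat_add, reflMat_smul, reflMat_smul]
      have hdom : bz ≤ az ∨ (u₀.head? = some t ∧ x = s) ∨ (u₀.head? = some s ∧ x = t) := by
        rcases u₀ with _ | ⟨y, u₀'⟩
        · exact Or.inl (hnil rfl)
        · have hy : y = s ∨ y = t := hmem y (by simp)
          have hxy : x ≠ y := (List.isChain_cons_cons.1 hch).1
          rcases hx with hxs | hxt
          · rcases hy with hys | hyt
            · exact absurd (hxs.trans hys.symm) hxy
            · exact Or.inr (Or.inl ⟨by simp [hyt], hxs⟩)
          · rcases hy with hys | hyt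
            · exact Or.inr (Or.inr ⟨by simp [hys], hxt⟩)
            · exact absurd (hxt.trans hyt.symm) hxy
      rcases hx with hxs | hxt
      · -- x = s : then u₀ is nonempty with head t, so az ≤ bz
        rw [hxs] at hwpx hch hlast ⊢
        have hne : u₀ ≠ [] := by
          intro h
          rcases hlast with h' | h'
          · exact absurd h' (by simp)
          · rw [h, List.getLast?_singleton] at h'
            exact hst (Option.some_injective _ h')
        have hab : az ≤ bz := by
          rcases hdom with h | ⟨hh, _⟩ | ⟨_, hx'⟩
          · -- this branch only possible when bz ≤ az and also az ≤ bz needed; derive from hht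
            rcases u₀ with _ | ⟨y, u₀'⟩
            · exact absurd rfl hne
            · have hy : y = s ∨ y = t := hmem y (by simp)
              have hxy : s ≠ y := (List.isChain_cons_cons.1 hch).1
              rcases hy with hys | hyt
              · exact absurd hys.symm hxy
              · exact hht (by simp [hyt])
          · exact hht hh
          · exact absurd (hxs.symm.trans hx') hst
        refine ⟨m * bz - az, bz, by nlinarith, hbz, ?_, ?_, ?_, ?_⟩
        · rw [hwpx, reflMat_dd_self a hdiag, reflMat_dd_ne a t s (Ne.symm hst), hts]
          funext w; simp; ring
        · intro _; nlinarith
        · intro h; simp at h; exact absurd h hst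
        · intro h; simp at h
      · -- x = t : then bz ≤ az
        rw [hxt] at hwpx hch hlast ⊢
        have hab : bz ≤ az := by
          rcases hdom with h | ⟨_, hx'⟩ | ⟨hh, _⟩
          · exact h
          · exact absurd (hxt.symm.trans hx') (Ne.symm hst)
          · exact hhs hh
        refine ⟨az, m * az - bz, haz, by nlinarith, ?_, ?_, ?_, ?_⟩
        · rw [hwpx, reflMat_dd_self a hdiag, reflMat_dd_ne a s t hst, hstv]
          funext w; simp; ring
        · intro h; simp at h; exact absurd h hst.symm
        · intro _; nlinarith
        · intro h; simp at h

lemma pair_classify {s t x y : V} (hx : x = s ∨ x = t) (hy : y = s ∨ y = t) (hxy : x ≠ y) :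
    (x = s ∧ y = t) ∨ (x = t ∧ y = s) := by
  rcases hx with hx | hx <;> rcases hy with hy | hy
  · exact absurd (hx.trans hy.symm) hxy
  · exact Or.inl ⟨hx, hy⟩
  · exact Or.inr ⟨hx, hy⟩
  · exact absurd (hx.trans hy.symm) hxy

/-- Rank-2 alternative: a word in `{s,t}` either sends `α_s` to a nonnegative
combination of `α_s, α_t`, or can be shortened after multiplication by `r_s`. -/
lemma rank2 (hsym : ∀ u v, a u v = a v u) (hdiag : ∀ v, a v v = 2)
    (hoff : ∀ u v, u ≠ v → a u v ≤ 0) {s t : V} (hst : s ≠ t) :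
    ∀ n : ℕ, ∀ u : List V, u.length ≤ n → (∀ c ∈ u, c = s ∨ c = t) →
      (∃ az bz : ℤ, 0 ≤ az ∧ 0 ≤ bz ∧ wp a u (dd s) = az • dd s + bz • dd t) ∨
      (∃ u' : List V, u'.length < u.length ∧ ∀ β, wp a u' β = wp a u (reflMat a s β)) := by
  have hstv : a s t = -(-(a s t)) := by ring
  have hts : a t s = -(-(a s t)) := by rw [hsym t s]; ring
  have hm0 : 0 ≤ -(a s t) := by have := hoff s t hst; omega
  intro n
  induction n with
  | zero =>
      intro u hu _
      have hnil : u = [] := List.eq_nil_of_length_eq_zero (Nat.le_antisymm hu (Nat.zero_le _))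
      subst hnil
      left; exact ⟨1, 0, by norm_num, le_rfl, by funext w; simp [wp_nil]⟩
  | succ n ih =>
      intro u hu hmem
      obtain ⟨u₁, hlen, hwpeq, hch, hsub⟩ := alt_reduce a hdiag u
      have hU : ∀ β, wp a u β = wp a u₁ β := fun β => (congrFun hwpeq β).symm
      have hmem₁ : ∀ c ∈ u₁, c = s ∨ c = t := fun c hc => hmem c (hsub c hc)
      by_cases hm2 : 2 ≤ -(a s t)
      · -- `m ≥ 2` : use the last letter and positivity
        rcases List.eq_nil_or_concat u₁ with h1 | ⟨w, c, hconc⟩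
        · left
          refine ⟨1, 0, by norm_num, le_rfl, ?_⟩
          rw [hU, h1]; funext w; simp [wp_nil]
        · have hc : c = s ∨ c = t := hmem₁ c (by rw [hconc]; simp)
          rw [List.concat_eq_append] at hconc
          rcases hc with hcs | hct
          · -- last letter `s` : shorten
            right
            refine ⟨w, ?_, ?_⟩
            · have : u₁.length = w.length + 1 := by rw [hconc]; simp
              omega
            · intro β
              rw [hU, hconc, hcs, wp_concat, reflMat_invol a hdiag]
          · -- last letter `t` : positivity
            left
            obtain ⟨az, bz, haz, hbz, heq, -, -, -⟩ :=
              pos_alt a hdiag hst hm2 hts hstv u₁ hmem₁ hch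
                (Or.inr (by rw [hconc, hct]; exact List.getLast?_concat))
            exact ⟨az, bz, haz, hbz, by rw [hU]; exact heq⟩
      · -- `m ∈ {0,1}`
        have hm01 : a s t = 0 ∨ a s t = -1 := by omega
        have hcomm : a s t = 0 → ∀ (x y : V), ((x = s ∧ y = t) ∨ (x = t ∧ y = s)) →
            ∀ β, reflMat a x (reflMat a y β) = reflMat a y (reflMat a x β) := by
          intro h0 x y hxy β
          rcases hxy with ⟨hx, hy⟩ | ⟨hx, hy⟩
          · rw [hx, hy]; exact refl_comm a hsym hdiag hst (by rw [hsym]; exact h0) β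
          · rw [hx, hy]; exact (refl_comm a hsym hdiag hst (by rw [hsym]; exact h0) β).symm
        have hbraid : a s t = -1 → ∀ (x y : V), ((x = s ∧ y = t) ∨ (x = t ∧ y = s)) →
            ∀ β, reflMat a x (reflMat a y (reflMat a x β))
              = reflMat a y (reflMat a x (reflMat a y β)) := by
          intro h1 x y hxy β
          rcases hxy with ⟨hx, hy⟩ | ⟨hx, hy⟩
          · rw [hx, hy]; exact refl_braid a hsym hdiag hst (by rw [hsym]; exact h1) h1 β
          · rw [hx, hy]; exact (refl_braid a hsym hdiag hst (by rw [hsym]; exact h1) h1 β).symm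
        match u₁, hlen, hU, hch, hmem₁ with
        | [], hlen, hU, hch, hmem₁ =>
            left
            refine ⟨1, 0, by norm_num, le_rfl, ?_⟩
            rw [hU]; funext w; simp [wp_nil]
        | [x1], hlen, hU, hch, hmem₁ =>
            have hx1 : x1 = s ∨ x1 = t := hmem₁ x1 (by simp)
            simp only [List.length_cons, List.length_nil] at hlen
            rcases hx1 with hx1 | hx1
            · right
              refine ⟨[], by simp only [List.length_nil, List.length_cons] at hlen ⊢; omega, ?_⟩
              intro β
              have : wp a u (reflMat a s β) = reflMat a x1 (reflMat a s β) := hU _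
              rw [this, hx1, reflMat_invol a hdiag]
              all_goals exact wp_nil a β
            · left
              refine ⟨1, -(a s t), by norm_num, hm0, ?_⟩
              have : wp a u (dd s) = reflMat a x1 (dd s) := hU _
              rw [this, hx1, reflMat_dd_ne a s t hst]
              funext w; simp <;> ring
        | [x1, x2], hlen, hU, hch, hmem₁ =>
            have h12 : x1 ≠ x2 := (List.isChain_cons_cons.1 hch).1
            simp only [List.length_cons, List.length_nil] at hlen
            rcases pair_classify (hmem₁ x1 (by simp)) (hmem₁ x2 (by simp)) h12 with
              ⟨hx1, hx2⟩ | ⟨hx1, hx2⟩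
            · -- [s, t]
              rcases hm01 with h0 | h1
              · right
                refine ⟨[t], by simp only [List.length_nil, List.length_cons] at hlen ⊢; omega, ?_⟩
                intro β
                have : wp a u (reflMat a s β)
                    = reflMat a x1 (reflMat a x2 (reflMat a s β)) := hU _
                rw [this, hx1, hx2, hcomm h0 t s (Or.inr ⟨rfl, rfl⟩), reflMat_invol a hdiag]
                all_goals rfl
              · left
                refine ⟨0, 1, le_rfl, by norm_num, ?_⟩
                have : wp a u (dd s) = reflMat a x1 (reflMat a x2 (dd s)) := hU _
                rw [this, hx1, hx2, reflMat_dd_ne a s t hst,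
                  reflMat_add, reflMat_smul, reflMat_dd_self a hdiag,
                  reflMat_dd_ne a t s (Ne.symm hst), hsym t s, h1]
                funext w; simp <;> ring
            · -- [t, s]
              right
              refine ⟨[t], by simp only [List.length_nil, List.length_cons] at hlen ⊢; omega, ?_⟩
              intro β
              have : wp a u (reflMat a s β)
                  = reflMat a x1 (reflMat a x2 (reflMat a s β)) := hU _
              rw [this, hx1, hx2, reflMat_invol a hdiag]
              all_goals rfl
        | [x1, x2, x3], hlen, hU, hch, hmem₁ =>
            have h12 : x1 ≠ x2 := (List.isChain_cons_cons.1 hch).1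
            have h23 : x2 ≠ x3 := (List.isChain_cons_cons.1 (List.isChain_cons_cons.1 hch).2).1
            simp only [List.length_cons, List.length_nil] at hlen
            rcases pair_classify (hmem₁ x1 (by simp)) (hmem₁ x2 (by simp)) h12 with
              ⟨hx1, hx2⟩ | ⟨hx1, hx2⟩
            · -- [s, t, ?] with x3 ≠ t in {s,t} so x3 = s : [s,t,s]
              have hx3 : x3 = s := by
                rcases hmem₁ x3 (by simp) with h | h
                · exact h
                · exact absurd (hx2.trans h.symm) h23
              right
              refine ⟨[s, t], by simp only [List.length_nil, List.length_cons] at hlen ⊢; omega, ?_⟩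
              intro β
              have : wp a u (reflMat a s β)
                  = reflMat a x1 (reflMat a x2 (reflMat a x3 (reflMat a s β))) := hU _
              rw [this, hx1, hx2, hx3, reflMat_invol a hdiag]
              all_goals rfl
            · -- [t, s, t]
              have hx3 : x3 = t := by
                rcases hmem₁ x3 (by simp) with h | h
                · exact absurd (hx2.trans h.symm) h23
                · exact h
              rcases hm01 with h0 | h1
              · right
                refine ⟨[], by simp only [List.length_nil, List.length_cons] at hlen ⊢; omega, ?_⟩
                intro β
                have : wp a u (reflMat a s β)
                    = reflMat a x1 (reflMat a x2 (reflMat a x3 (reflMat a s β))) := hU _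
                rw [this, hx1, hx2, hx3,
                  hcomm h0 t s (Or.inr ⟨rfl, rfl⟩) β, reflMat_invol a hdiag,
                  reflMat_invol a hdiag]
                all_goals rfl
              · right
                refine ⟨[s, t], by simp only [List.length_nil, List.length_cons] at hlen ⊢; omega, ?_⟩
                intro β
                have : wp a u (reflMat a s β)
                    = reflMat a x1 (reflMat a x2 (reflMat a x3 (reflMat a s β))) := hU _
                rw [this, hx1, hx2, hx3,
                  hbraid h1 t s (Or.inr ⟨rfl, rfl⟩) (reflMat a s β),
                  reflMat_invol a hdiag]
                all_goals rfl
        | x1 :: x2 :: x3 :: x4 :: rest, hlen, hU, hch, hmem₁ =>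
            have h12 : x1 ≠ x2 := (List.isChain_cons_cons.1 hch).1
            have hch2 := (List.isChain_cons_cons.1 hch).2
            have h23 : x2 ≠ x3 := (List.isChain_cons_cons.1 hch2).1
            have hch3 := (List.isChain_cons_cons.1 hch2).2
            have h34 : x3 ≠ x4 := (List.isChain_cons_cons.1 hch3).1
            have hcls := pair_classify (hmem₁ x1 (by simp)) (hmem₁ x2 (by simp)) h12
            have hx3 : x3 = x1 := by
              rcases hcls with ⟨hx1, hx2⟩ | ⟨hx1, hx2⟩ <;>
                rcases hmem₁ x3 (by simp) with h | h
              · exact h.trans hx1.symm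
              · exact absurd (hx2.trans h.symm) h23
              · exact absurd (hx2.trans h.symm) h23
              · exact h.trans hx1.symm
            have hx4 : x4 = x2 := by
              rcases hcls with ⟨hx1, hx2⟩ | ⟨hx1, hx2⟩ <;>
                rcases hmem₁ x4 (by simp) with h | h
              · exact absurd ((hx3.trans hx1).trans h.symm) h34
              · exact h.trans hx2.symm
              · exact h.trans hx2.symm
              · exact absurd ((hx3.trans hx1).trans h.symm) h34
            simp only [List.length_cons] at hlen
            rcases hm01 with h0 | h1
            · -- m = 0 : the first four letters cancel
              have hred : ∀ β, wp a (x1 :: x2 :: x3 :: x4 :: rest) β = wp a rest β := by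
                intro β
                show reflMat a x1 (reflMat a x2 (reflMat a x3 (reflMat a x4 (wp a rest β))))
                  = wp a rest β
                rw [hx3, hx4]
                rw [hcomm h0 x2 x1 (by tauto) (reflMat a x2 (wp a rest β)),
                  reflMat_invol a hdiag, reflMat_invol a hdiag]
              have hr : rest.length ≤ n := by omega
              rcases ih rest hr (fun c hc => hmem₁ c (by simp [hc])) with
                ⟨az, bz, haz, hbz, heq⟩ | ⟨u', hlt, hprop⟩
              · left
                exact ⟨az, bz, haz, hbz, by rw [hU, hred]; exact heq⟩
              · right
                refine ⟨u', by omega, ?_⟩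
                intro β
                rw [hprop β, ← hred (reflMat a s β), ← hU (reflMat a s β)]
            · -- m = 1 : the first four letters reduce to two
              have hred : ∀ β, wp a (x1 :: x2 :: x3 :: x4 :: rest) β
                  = wp a (x2 :: x1 :: rest) β := by
                intro β
                show reflMat a x1 (reflMat a x2 (reflMat a x3 (reflMat a x4 (wp a rest β))))
                  = reflMat a x2 (reflMat a x1 (wp a rest β))
                rw [hx3, hx4]
                rw [hbraid h1 x1 x2 (by tauto) (reflMat a x2 (wp a rest β)),
                  reflMat_invol a hdiag]
              have hr : (x2 :: x1 :: rest).length ≤ n := by simp; omega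
              rcases ih (x2 :: x1 :: rest) hr
                  (fun c hc => by
                    rcases List.mem_cons.1 hc with h | h
                    · exact h ▸ hmem₁ x2 (by simp)
                    · rcases List.mem_cons.1 h with h' | h'
                      · exact h' ▸ hmem₁ x1 (by simp)
                      · exact hmem₁ c (by simp [h'])) with
                ⟨az, bz, haz, hbz, heq⟩ | ⟨u', hlt, hprop⟩
              · left
                exact ⟨az, bz, haz, hbz, by rw [hU, hred]; exact heq⟩
              · right
                refine ⟨u', by simp at hlt; omega, ?_⟩
                intro β
                rw [hprop β, ← hred (reflMat a s β), ← hU (reflMat a s β)]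

/-- Minimal word length representing a transformation. -/
noncomputable def len (f : (V → ℤ) → V → ℤ) : ℕ :=
  sInf {n | ∃ l : List V, l.length = n ∧ wp a l = f}

lemma len_le {f : (V → ℤ) → V → ℤ} {l : List V} (h : wp a l = f) : len a f ≤ l.length :=
  Nat.sInf_le ⟨l, rfl, h⟩

lemma exists_reduced {f : (V → ℤ) → V → ℤ} (l : List V) (h : wp a l = f) :
    ∃ l₀ : List V, wp a l₀ = f ∧ l₀.length = len a f := by
  have hne : {n | ∃ l : List V, l.length = n ∧ wp a l = f}.Nonempty := ⟨l.length, l, rfl, h⟩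
  obtain ⟨l₀, h1, h2⟩ := Nat.sInf_mem hne
  exact ⟨l₀, h2, h1⟩

/-- Right multiplication by a reflection. -/
noncomputable def rmul (f : (V → ℤ) → V → ℤ) (s : V) : (V → ℤ) → V → ℤ :=
  fun β => f (reflMat a s β)

lemma wp_rmul (l : List V) (s : V) : rmul a (wp a l) s = wp a (l ++ [s]) := by
  funext β; rw [rmul, wp_concat]

lemma rmul_rmul (hdiag : ∀ v, a v v = 2) (f : (V → ℤ) → V → ℤ) (s : V) :
    rmul a (rmul a f s) s = f := by
  funext β; rw [rmul, rmul, reflMat_invol a hdiag]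

lemma len_rmul_le (f : (V → ℤ) → V → ℤ) (l : List V) (h : wp a l = f) (s : V) :
    len a (rmul a f s) ≤ len a f + 1 := by
  obtain ⟨l₀, h0, h1⟩ := exists_reduced a l h
  have : wp a (l₀ ++ [s]) = rmul a f s := by rw [← wp_rmul, h0]
  have := len_le a this
  simp at this
  omega

/-- Greedy descent into the coset of the parabolic generated by `r_s, r_t`. -/
lemma greedy (hdiag : ∀ v, a v v = 2) :
    ∀ n : ℕ, ∀ f : (V → ℤ) → V → ℤ, (∃ l : List V, wp a l = f) → len a f = n →
    ∀ s t : V, ∃ (xl u : List V), (∀ c ∈ u, c = s ∨ c = t) ∧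
      (∀ β, f β = wp a xl (wp a u β)) ∧
      len a f = len a (wp a xl) + u.length ∧
      len a (wp a xl) ≤ len a (rmul a (wp a xl) s) ∧
      len a (wp a xl) ≤ len a (rmul a (wp a xl) t) := by
  intro n
  induction n using Nat.strong_induction_on with
  | _ n ih =>
    intro f hf hn s t
    obtain ⟨l, hl⟩ := hf
    by_cases h1 : len a (rmul a f s) < len a f
    · obtain ⟨xl, u, hmem, heq, hsum, hxs, hxt⟩ :=
        ih (len a (rmul a f s)) (hn ▸ h1) (rmul a f s) ⟨l ++ [s], by rw [← wp_rmul, hl]⟩ rfl s t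
      refine ⟨xl, u ++ [s], ?_, ?_, ?_, hxs, hxt⟩
      · intro c hc
        rcases List.mem_append.1 hc with h | h
        · exact hmem c h
        · left; simpa using h
      · intro β
        have : f β = rmul a f s (reflMat a s β) := by
          rw [rmul, reflMat_invol a hdiag]
        rw [this, heq, wp_concat]
      · have hle : len a f ≤ len a (rmul a f s) + 1 := by
          have : rmul a (rmul a f s) s = f := rmul_rmul a hdiag f s
          calc len a f = len a (rmul a (rmul a f s) s) := by rw [this]
            _ ≤ len a (rmul a f s) + 1 := len_rmul_le a _ (l ++ [s]) (by rw [← wp_rmul, hl]) s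
        simp only [List.length_append, List.length_cons, List.length_nil]
        omega
    · by_cases h2 : len a (rmul a f t) < len a f
      · obtain ⟨xl, u, hmem, heq, hsum, hxs, hxt⟩ :=
          ih (len a (rmul a f t)) (hn ▸ h2) (rmul a f t) ⟨l ++ [t], by rw [← wp_rmul, hl]⟩ rfl s t
        refine ⟨xl, u ++ [t], ?_, ?_, ?_, hxs, hxt⟩
        · intro c hc
          rcases List.mem_append.1 hc with h | h
          · exact hmem c h
          · right; simpa using h
        · intro β
          have : f β = rmul a f t (reflMat a t β) := by
            rw [rmul, reflMat_invol a hdiag]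
          rw [this, heq, wp_concat]
        · have hle : len a f ≤ len a (rmul a f t) + 1 := by
            have : rmul a (rmul a f t) t = f := rmul_rmul a hdiag f t
            calc len a f = len a (rmul a (rmul a f t) t) := by rw [this]
              _ ≤ len a (rmul a f t) + 1 := len_rmul_le a _ (l ++ [t]) (by rw [← wp_rmul, hl]) t
          simp only [List.length_append, List.length_cons, List.length_nil]
          omega
      · refine ⟨l, [], by simp, ?_, by simp [hl], ?_, ?_⟩
        · intro β; rw [hl]; rfl
        · rw [hl]; omega
        · rw [hl]; omega

lemma dd_nonneg (v w : V) : 0 ≤ dd v w := by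
  by_cases h : w = v <;> simp [dd, h]

/-- Humphreys 5.4: if `len (w r_s) ≥ len w` then `w(α_s) ≥ 0`. -/
lemma posroot (hsym : ∀ u v, a u v = a v u) (hdiag : ∀ v, a v v = 2)
    (hoff : ∀ u v, u ≠ v → a u v ≤ 0) :
    ∀ n : ℕ, ∀ l : List V, len a (wp a l) = n →
      ∀ s : V, len a (wp a l) ≤ len a (rmul a (wp a l) s) →
      ∀ w, 0 ≤ wp a l (dd s) w := by
  intro n
  induction n using Nat.strong_induction_on with
  | _ n ih =>
    intro l hn s hs w
    match n, hn with
    | 0, hn =>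
        obtain ⟨l₀, h0, h1⟩ := exists_reduced a l rfl
        rw [hn] at h1
        have : l₀ = [] := List.eq_nil_of_length_eq_zero h1
        rw [← h0, this, wp_nil]
        exact dd_nonneg s w
    | (n + 1), hn =>
        obtain ⟨l₀, h0, h1⟩ := exists_reduced a l rfl
        rw [hn] at h1
        have hne : l₀ ≠ [] := by intro h; rw [h] at h1; simp at h1
        obtain ⟨w0, t, hconc⟩ := (List.eq_nil_or_concat l₀).resolve_left hne
        rw [List.concat_eq_append] at hconc
        have hrt : rmul a (wp a l) t = wp a w0 := by
          funext β
          rw [← h0, hconc, rmul, wp_concat, reflMat_invol a hdiag]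
        have hltt : len a (rmul a (wp a l) t) ≤ n := by
          rw [hrt]
          have := len_le a (f := wp a w0) rfl
          have hw0 : w0.length = n := by
            rw [hconc] at h1; simp at h1; omega
          omega
        have hts : t ≠ s := by
          intro h
          rw [h] at hltt
          omega
        -- greedy decomposition
        obtain ⟨xl, u, hmem, heq, hsum, hxs, hxt⟩ :=
          greedy a hdiag (len a (wp a l)) (wp a l) ⟨l, rfl⟩ rfl s t
        have hune : u ≠ [] := by
          intro h
          rw [h] at heq hsum
          have hfx : wp a l = wp a xl := by
            funext β; rw [heq β, wp_nil]
          rw [← hfx] at hxt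
          omega
        have hulen : 1 ≤ u.length := by
          cases u with
          | nil => exact absurd rfl hune
          | cons c u' => simp
        have hxlt : len a (wp a xl) < n + 1 := by omega
        rcases rank2 a hsym hdiag hoff hts.symm u.length u le_rfl hmem with
          ⟨az, bz, haz, hbz, hgood⟩ | ⟨u', hlt, hbad⟩
        · -- positive case
          have : wp a l (dd s) = az • wp a xl (dd s) + bz • wp a xl (dd t) := by
            rw [heq, hgood, wp_add, wp_smul, wp_smul]
          rw [this]
          have h1 := ih (len a (wp a xl)) hxlt xl rfl s hxs w
          have h2 := ih (len a (wp a xl)) hxlt xl rfl t hxt w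
          simp only [Pi.add_apply, Pi.smul_apply, smul_eq_mul]
          exact add_nonneg (mul_nonneg haz h1) (mul_nonneg hbz h2)
        · -- shortening case contradicts the hypothesis
          exfalso
          obtain ⟨xr, hxr, hxrlen⟩ := exists_reduced a xl (f := wp a xl) rfl
          have hcomp : wp a (xr ++ u') = rmul a (wp a l) s := by
            funext β
            rw [wp_append, rmul, heq, hbad β, congrFun hxr (wp a u (reflMat a s β))]
          have hlen2 := len_le a hcomp
          simp only [List.length_append] at hlen2
          rw [hxrlen] at hlen2
          omega

/-- Dichotomy: each `w(α_v)` is nonnegative or nonpositive. -/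
lemma dichotomy (hsym : ∀ u v, a u v = a v u) (hdiag : ∀ v, a v v = 2)
    (hoff : ∀ u v, u ≠ v → a u v ≤ 0) (l : List V) (v : V) :
    (∀ w, 0 ≤ wp a l (dd v) w) ∨ (∀ w, wp a l (dd v) w ≤ 0) := by
  by_cases h : len a (wp a l) ≤ len a (rmul a (wp a l) v)
  · exact Or.inl (posroot a hsym hdiag hoff _ l rfl v h)
  · right
    push_neg at h
    have hg : rmul a (wp a l) v = wp a (l ++ [v]) := by
      funext β; rw [rmul, wp_concat]
    have hgv : rmul a (wp a (l ++ [v])) v = wp a l := by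
      funext β; rw [rmul, wp_concat, reflMat_invol a hdiag]
    have hle : len a (wp a (l ++ [v])) ≤ len a (rmul a (wp a (l ++ [v])) v) := by
      rw [hgv, ← hg]; omega
    have hpos := posroot a hsym hdiag hoff _ (l ++ [v]) rfl v hle
    intro w
    have : wp a (l ++ [v]) (dd v) = (-1 : ℤ) • wp a l (dd v) := by
      rw [wp_concat, reflMat_dd_self a hdiag, wp_smul]
    have h2 := hpos w
    rw [this] at h2
    simp at h2
    omega

/-- Exchange: if `w(α_v)` has a negative coordinate then `w r_v` admits a shorter word. -/
lemma exchange (hsym : ∀ u v, a u v = a v u) (hdiag : ∀ v, a v v = 2)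
    (hoff : ∀ u v, u ≠ v → a u v ≤ 0) (l : List V) (v : V)
    (hneg : ∃ w, wp a l (dd v) w < 0) :
    ∃ l' : List V, l'.length + 1 = l.length ∧ ∀ β, wp a l' β = wp a l (reflMat a v β) := by
  classical
  set P : ℕ → Prop := fun j => ∃ w, wp a (l.drop (l.length - j)) (dd v) w < 0 with hP
  have hPm : P l.length := by simpa [hP] using hneg
  have hj := Nat.find_spec (⟨l.length, hPm⟩ : ∃ j, P j)
  set j := Nat.find (⟨l.length, hPm⟩ : ∃ j, P j) with hjdef
  have hjle : j ≤ l.length := Nat.find_min' _ hPm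
  have hj0 : ¬ P 0 := by
    rw [hP]
    simp only [Nat.sub_zero, List.drop_length, not_exists, not_lt]
    intro w
    rw [wp_nil]
    exact dd_nonneg v w
  have hj1 : 1 ≤ j := by
    rcases Nat.eq_zero_or_pos j with h | h
    · rw [h] at hj; exact absurd hj hj0
    · exact h
  have hjmin : ¬ P (j - 1) := Nat.find_min _ (by omega)
  set k := l.length - j with hk
  have hkl : k < l.length := by omega
  have hk1 : l.length - (j - 1) = k + 1 := by omega
  have hdne : l.drop k ≠ [] := by
    intro h
    have := congrArg List.length h
    simp only [List.length_drop, List.length_nil] at this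
    omega
  obtain ⟨u, τ, hdropk⟩ := List.exists_cons_of_ne_nil hdne
  have hτeq : τ = l.drop (k + 1) := by
    rw [← List.tail_drop]
    rw [hdropk]
    rfl
  have hτlen : τ.length = l.length - (k + 1) := by
    rw [hτeq, List.length_drop]
  -- minimality: the suffix one step earlier is nonnegative
  have hτpos : ∀ w, 0 ≤ wp a τ (dd v) w := by
    intro w
    by_contra hw
    refine hjmin ?_
    rw [hP]
    refine ⟨w, ?_⟩
    rw [hk1, ← hτeq]
    omega
  -- the full suffix is nonpositive (dichotomy + negativity)
  have hσneg : ∃ w, wp a (l.drop k) (dd v) w < 0 := hj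
  have hσnonpos : ∀ w, wp a (l.drop k) (dd v) w ≤ 0 := by
    rcases dichotomy a hsym hdiag hoff (l.drop k) v with h | h
    · obtain ⟨w, hw⟩ := hσneg
      exact absurd (h w) (by omega)
    · exact h
  -- off-diagonal coordinates of `τ(α_v)` vanish
  have hoffzero : ∀ w, w ≠ u → wp a τ (dd v) w = 0 := by
    intro w hw
    have hσ : wp a (l.drop k) (dd v) w = wp a τ (dd v) w := by
      rw [hdropk, wp_cons, reflMat_apply, dd_ne hw]
      ring
    have h1 := hσnonpos w
    rw [hσ] at h1
    exact le_antisymm h1 (hτpos w)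
  have hτdd : wp a τ (dd v) = (wp a τ (dd v) u) • dd u := by
    funext w
    by_cases hw : w = u
    · rw [hw]; simp [dd_self]
    · rw [hoffzero w hw]; simp [dd_ne hw]
  -- the square norm forces the coefficient to be 1
  have hnorm : bform2 a (wp a τ (dd v)) (wp a τ (dd v)) = 2 := by
    rw [bform2_wp a hsym hdiag, bform2_dd_right, S_dd, hdiag]
  have hc1 : wp a τ (dd v) u = 1 := by
    set c := wp a τ (dd v) u with hcdef
    have h2 : bform2 a (c • dd u) (c • dd u) = c * (c * 2) := by
      rw [bform2_smul_left, bform2_smul_right a hsym, bform2_dd_right, S_dd, hdiag]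
    rw [hτdd] at hnorm
    rw [h2] at hnorm
    have hc0 : 0 ≤ c := hτpos u
    nlinarith
  have hτu : wp a τ (dd v) = dd u := by rw [hτdd, hc1, one_smul]
  have hconj := wp_conj a hsym hdiag hτu
  refine ⟨l.take k ++ τ, ?_, ?_⟩
  · simp only [List.length_append, List.length_take, hτlen]
    omega
  · intro β
    have hsplit : wp a l (reflMat a v β) = wp a (l.take k) (wp a (l.drop k) (reflMat a v β)) := by
      rw [← wp_append, List.take_append_drop]
    rw [hsplit, hdropk, wp_cons, hconj β, reflMat_invol a hdiag, wp_append]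

/-- Main induction: an antidominant `β ≥ 0` only grows under the Weyl group. -/
lemma wp_ge (hsym : ∀ u v, a u v = a v u) (hdiag : ∀ v, a v v = 2)
    (hoff : ∀ u v, u ≠ v → a u v ≤ 0) :
    ∀ n : ℕ, ∀ l : List V, l.length ≤ n → ∀ β : V → ℤ,
      (∀ v, 0 ≤ β v) → (∀ v, S a v β ≤ 0) → ∀ w, β w ≤ wp a l β w := by
  intro n
  induction n using Nat.strong_induction_on with
  | _ n ih =>
    intro l hl β hpos hanti w
    rcases List.eq_nil_or_concat l with h | ⟨l₁, v, hconc⟩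
    · rw [h, wp_nil]
    · rw [List.concat_eq_append] at hconc
      have hlen : l₁.length + 1 = l.length := by rw [hconc]; simp
      have hn1 : 1 ≤ n := by omega
      have hstep : wp a l β = wp a l₁ β + (- S a v β) • wp a l₁ (dd v) := by
        rw [hconc, wp_concat, reflMat_eq, wp_add, wp_smul]
      rcases dichotomy a hsym hdiag hoff l₁ v with hdvp | hdvn
      · have h1 := ih (n - 1) (by omega) l₁ (by omega) β hpos hanti w
        have h2 : 0 ≤ (- S a v β) * wp a l₁ (dd v) w :=
          mul_nonneg (by have := hanti v; omega) (hdvp w)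
        rw [hstep]
        simp only [Pi.add_apply, Pi.smul_apply, smul_eq_mul]
        omega
      · have hne : wp a l₁ (dd v) ≠ 0 := wp_dd_ne_zero a hdiag l₁ v
        obtain ⟨w₀, hw₀⟩ := Function.ne_iff.1 hne
        have hneg : ∃ w', wp a l₁ (dd v) w' < 0 := by
          refine ⟨w₀, ?_⟩
          have := hdvn w₀
          simp only [Pi.zero_apply] at hw₀
          omega
        obtain ⟨l', hl'len, hl'⟩ := exchange a hsym hdiag hoff l₁ v hneg
        have heq : wp a l β = wp a l' β := by
          rw [hconc, wp_concat, hl' β]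
        rw [heq]
        exact ih (n - 1) (by omega) l' (by omega) β hpos hanti w

end Stmt14

/-- Let `a` be the Cartan matrix of a finite graph without self-loops
(symmetric, `2` on the diagonal, non-positive integers off the diagonal), `C` its
fundamental set and `W` its Weyl group. Then every `β ∈ Δ₊ⁱᵐ = W·C` lies in `Q_+`
and satisfies `(β|β) ≤ 0` (stated as `2(β|β) ≤ 0` to stay in `ℤ`). -/
theorem posRootsIm_subset_and_nonpos {V : Type} [Fintype V] (a : V → V → ℤ)
    (hsym : ∀ u v, a u v = a v u) (hdiag : ∀ v, a v v = 2)
    (hoff : ∀ u v, u ≠ v → a u v ≤ 0) :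
    ∀ β ∈ posRootsIm a, (∀ v, 0 ≤ β v) ∧ bform2 a β β ≤ 0 := by
  intro β hβ
  simp only [posRootsIm, Set.mem_iUnion] at hβ
  obtain ⟨β₀, hβ₀, hβw⟩ := hβ
  obtain ⟨l, hl⟩ := hβw
  obtain ⟨hpos, hne0, hanti, -⟩ := hβ₀
  have hwp : β = Stmt14.wp a l β₀ := hl
  constructor
  · intro v
    have h := Stmt14.wp_ge a hsym hdiag hoff l.length l le_rfl β₀ hpos (fun u => hanti u) v
    rw [hwp]
    exact le_trans (hpos v) h
  · rw [hwp, Stmt14.bform2_wp a hsym hdiag, Stmt14.bform2_eq_sum_S]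
    apply Finset.sum_nonpos
    intro v _
    exact mul_nonpos_iff.mpr (Or.inr ⟨hanti v, hpos v⟩)

end
end
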